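/- arXiv:2406.09124 — 9 statements merged into one kernel-verified Lean document; each statement's English description precedes it below -/
import Mathlib

section
/- For every primitive vector v in ℤ² with |v| > 1 (Euclidean norm), there exists a unique pair of vectors v₋, v₊ in ℤ² satisfying v₋ × v = 1, v × v₊ = 1, v₋ × v₊ = 1, |v₋| < |v|, and |v₊| < |v|, where (a,b) × (c,d) := ad − bc. Moreover this pair satisfies v = v₋ + v₊. -/
/-- Cross product on ℤ²: (a,b) × (c,d) = ad − bc. -/
def cross (v w : ℤ × ℤ) : ℤ := v.1 * w.2 - v.2 * w.1

/-- Euclidean norm of a vector in ℤ². -/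
noncomputable def enorm (v : ℤ × ℤ) : ℝ := Real.sqrt ((v.1 : ℝ) ^ 2 + (v.2 : ℝ) ^ 2)

/-- A vector of ℤ² is primitive if its coordinates are coprime. -/
def IsPrimitive (v : ℤ × ℤ) : Prop := Int.gcd v.1 v.2 = 1

/-!
Write `q = |v|²`. For `w` with `w × v = ±1`, Lagrange's identity `(w·v)² + (w×v)² = |w|²|v|²`
gives `|w|² q = (w·v)² + 1`, so `|w| < |v|` exactly when `|w·v| < q`. Since `v₋ + v₊ = v` is
forced by the three cross products, a pair is admissible exactly when `v₋ × v = 1` and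
`0 < v₋·v < q`. The solutions of `w × v = 1` form a coset `w₀ + ℤv` (nonempty by Bézout),
along which `w·v` runs through a residue class mod `q`, and that class is not `0` since
`q ∤ (w·v)² + 1`. So exactly one solution has `w·v` in `(0, q)`.
-/

def dot (v w : ℤ × ℤ) : ℤ := v.1 * w.1 + v.2 * w.2

def normSq (v : ℤ × ℤ) : ℤ := v.1 ^ 2 + v.2 ^ 2

def IsPickPair (v : ℤ × ℤ) (p : (ℤ × ℤ) × (ℤ × ℤ)) : Prop :=
  cross p.1 v = 1 ∧ cross v p.2 = 1 ∧ cross p.1 p.2 = 1 ∧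
    _root_.enorm p.1 < _root_.enorm v ∧ _root_.enorm p.2 < _root_.enorm v

lemma normSq_nonneg (v : ℤ × ℤ) : 0 ≤ normSq v := by
  unfold normSq; positivity

lemma enorm_eq_sqrt_normSq (v : ℤ × ℤ) : _root_.enorm v = √(normSq v : ℝ) := by
  simp [_root_.enorm, normSq]

lemma enorm_lt_enorm_iff {x y : ℤ × ℤ} :
    _root_.enorm x < _root_.enorm y ↔ normSq x < normSq y := by
  rw [enorm_eq_sqrt_normSq, enorm_eq_sqrt_normSq,
    Real.sqrt_lt_sqrt_iff (by exact_mod_cast normSq_nonneg x), Int.cast_lt]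

lemma one_lt_enorm_iff {v : ℤ × ℤ} : 1 < _root_.enorm v ↔ 1 < normSq v := by
  rw [enorm_eq_sqrt_normSq, Real.lt_sqrt zero_le_one, one_pow, ← Int.cast_one, Int.cast_lt]

lemma cross_sub_left (u v w : ℤ × ℤ) : cross (u - v) w = cross u w - cross v w := by
  simp only [cross, Prod.fst_sub, Prod.snd_sub]; ring

lemma cross_smul_left_self (k : ℤ) (v : ℤ × ℤ) : cross (k • v) v = 0 := by
  simp only [cross, Prod.smul_fst, Prod.smul_snd, smul_eq_mul]; ring

lemma dot_sub_left (u v w : ℤ × ℤ) : dot (u - v) w = dot u w - dot v w := by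
  simp only [dot, Prod.fst_sub, Prod.snd_sub]; ring

lemma dot_self (v : ℤ × ℤ) : dot v v = normSq v := by
  simp only [dot, normSq]; ring

lemma dot_smul_left (k : ℤ) (v w : ℤ × ℤ) : dot (k • v) w = k * dot v w := by
  simp only [dot, Prod.smul_fst, Prod.smul_snd, smul_eq_mul]; ring

lemma dot_sq_add_cross_sq (w v : ℤ × ℤ) :
    dot w v ^ 2 + cross w v ^ 2 = normSq w * normSq v := by
  simp only [dot, cross, normSq]; ring

lemma eq_add_of_cross_eq_one {a b v : ℤ × ℤ} (hav : cross a v = 1) (hvb : cross v b = 1)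
    (hab : cross a b = 1) : v = a + b := by
  simp only [cross] at hav hvb hab
  ext
  · simp only [Prod.fst_add]; linear_combination b.1 * hav + a.1 * hvb - v.1 * hab
  · simp only [Prod.snd_add]; linear_combination b.2 * hav + a.2 * hvb - v.2 * hab

lemma eq_smul_of_cross_eq_zero {a u v : ℤ × ℤ} (hav : cross a v = 1) (huv : cross u v = 0) :
    u = cross a u • v := by
  simp only [cross] at hav huv
  ext
  · simp only [Prod.smul_fst, smul_eq_mul, cross]
    linear_combination (-u.1) * hav + a.1 * huv
  · simp only [Prod.smul_snd, smul_eq_mul, cross]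
    linear_combination (-u.2) * hav + a.2 * huv

lemma normSq_lt_iff_abs_dot_lt {w v : ℤ × ℤ} (hwv : cross w v ^ 2 = 1) (hv : 1 < normSq v) :
    normSq w < normSq v ↔ |dot w v| < normSq v := by
  have lagrange := dot_sq_add_cross_sq w v
  rw [hwv] at lagrange
  constructor
  · intro hw
    refine abs_lt_of_sq_lt_sq ?_ (by omega)
    nlinarith
  · intro hd
    have hd_sq : dot w v ^ 2 ≤ (normSq v - 1) ^ 2 := sq_le_sq' (by grind) (by grind)
    nlinarith

lemma exists_cross_eq_one_of_isPrimitive {v : ℤ × ℤ} (hv : IsPrimitive v) :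
    ∃ a, cross a v = 1 := by
  obtain ⟨x, y, hxy⟩ := Int.isCoprime_iff_gcd_eq_one.mpr hv
  exact ⟨(y, -x), by simp only [cross]; linear_combination hxy⟩

lemma exists_cross_eq_one_dot_mem_Ioo {v : ℤ × ℤ} (hv : IsPrimitive v) (hq : 1 < normSq v) :
    ∃ a, cross a v = 1 ∧ dot a v ∈ Set.Ioo 0 (normSq v) := by
  obtain ⟨a₀, ha₀⟩ := exists_cross_eq_one_of_isPrimitive hv
  set a := a₀ - (dot a₀ v / normSq v) • v
  have hav : cross a v = 1 := by
    rw [cross_sub_left, cross_smul_left_self, ha₀, sub_zero]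
  have hdot : dot a v = dot a₀ v % normSq v := by
    rw [dot_sub_left, dot_smul_left, dot_self, Int.emod_def, mul_comm]
  refine ⟨a, hav, lt_of_le_of_ne ?_ ?_, ?_⟩
  · rw [hdot]; exact Int.emod_nonneg _ (by omega)
  · intro h
    have lagrange := dot_sq_add_cross_sq a v
    rw [← h, hav] at lagrange
    have : normSq v ∣ 1 := ⟨normSq a, by linear_combination lagrange⟩
    have := Int.le_of_dvd one_pos this
    omega
  · rw [hdot]; exact Int.emod_lt_of_pos _ (by omega)

lemma eq_of_cross_eq_one_of_dot_mem_Ioo {a a' v : ℤ × ℤ} (ha : cross a v = 1)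
    (ha' : cross a' v = 1) (hd : dot a v ∈ Set.Ioo 0 (normSq v))
    (hd' : dot a' v ∈ Set.Ioo 0 (normSq v)) : a' = a := by
  have hu := eq_smul_of_cross_eq_zero ha (u := a' - a)
    (by rw [cross_sub_left, ha, ha', sub_self])
  set k := cross a (a' - a)
  have hk : dot a' v - dot a v = k * normSq v := by
    rw [← dot_sub_left, hu, dot_smul_left, dot_self]
  obtain ⟨hd0, hd1⟩ := hd
  obtain ⟨hd0', hd1'⟩ := hd'
  have hk₀ : k = 0 := by
    rcases lt_trichotomy k 0 with h | h | h
    · nlinarith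
    · exact h
    · nlinarith
  rwa [hk₀, zero_smul, sub_eq_zero] at hu

lemma isPickPair_iff {v : ℤ × ℤ} (hq : 1 < normSq v) {p : (ℤ × ℤ) × (ℤ × ℤ)} :
    IsPickPair v p ↔ cross p.1 v = 1 ∧ dot p.1 v ∈ Set.Ioo 0 (normSq v) ∧ p.2 = v - p.1 := by
  obtain ⟨a, b⟩ := p
  simp only [IsPickPair]
  have hvv : cross v v = 0 := by simp only [cross]; ring
  have hcross_sub (h : cross a v = 1) : cross (v - a) v ^ 2 = 1 := by
    rw [cross_sub_left, hvv, h]; norm_num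
  have hdot_sub : dot (v - a) v = normSq v - dot a v := by rw [dot_sub_left, dot_self]
  constructor
  · rintro ⟨hav, hvb, hab, ha, hb⟩
    have hb_eq : b = v - a := by rw [eq_add_of_cross_eq_one hav hvb hab, add_sub_cancel_left]
    subst hb_eq
    have hda := (normSq_lt_iff_abs_dot_lt (by rw [hav]; norm_num) hq).1 (enorm_lt_enorm_iff.1 ha)
    have hdb := (normSq_lt_iff_abs_dot_lt (hcross_sub hav) hq).1 (enorm_lt_enorm_iff.1 hb)
    rw [hdot_sub] at hdb
    exact ⟨hav, ⟨by grind, by grind⟩, rfl⟩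
  · rintro ⟨hav, ⟨hd₀, hd₁⟩, hb_eq : b = v - a⟩
    subst hb_eq
    refine ⟨hav, ?_, ?_, ?_, ?_⟩
    · simp only [cross, Prod.fst_sub, Prod.snd_sub] at hav ⊢; linear_combination hav
    · simp only [cross, Prod.fst_sub, Prod.snd_sub] at hav ⊢; linear_combination hav
    · refine enorm_lt_enorm_iff.2 ((normSq_lt_iff_abs_dot_lt (by rw [hav]; norm_num) hq).2 ?_)
      exact abs_lt.2 ⟨by omega, hd₁⟩
    · refine enorm_lt_enorm_iff.2 ((normSq_lt_iff_abs_dot_lt (hcross_sub hav) hq).2 ?_)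
      rw [hdot_sub]
      exact abs_lt.2 ⟨by omega, by omega⟩

/-- Pick's theorem (Proposition-Definition): for every primitive `v` with `|v| > 1` there is a
unique pair `(v₋, v₊)` with `v₋ × v = v × v₊ = v₋ × v₊ = 1` and `|v₋|, |v₊| < |v|`; moreover
this pair satisfies `v = v₋ + v₊`. -/
theorem pick_decomposition (v : ℤ × ℤ) (hprim : IsPrimitive v) (hnorm : 1 < _root_.enorm v) :
    (∃! p : (ℤ × ℤ) × (ℤ × ℤ),
      cross p.1 v = 1 ∧ cross v p.2 = 1 ∧ cross p.1 p.2 = 1 ∧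
        _root_.enorm p.1 < _root_.enorm v ∧ _root_.enorm p.2 < _root_.enorm v) ∧
    (∀ p : (ℤ × ℤ) × (ℤ × ℤ),
      cross p.1 v = 1 → cross v p.2 = 1 → cross p.1 p.2 = 1 →
        _root_.enorm p.1 < _root_.enorm v → _root_.enorm p.2 < _root_.enorm v → v = p.1 + p.2) := by
  have hq := one_lt_enorm_iff.mp hnorm
  obtain ⟨a, hav, hdot⟩ := exists_cross_eq_one_dot_mem_Ioo hprim hq
  refine ⟨⟨(a, v - a), (isPickPair_iff hq).2 ⟨hav, hdot, rfl⟩, fun p hp ↦ ?_⟩,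
    fun p h₁ h₂ h₃ _ _ ↦ eq_add_of_cross_eq_one h₁ h₂ h₃⟩
  obtain ⟨hp₁, hpdot, hp₂⟩ := (isPickPair_iff hq).1 hp
  have hp₁_eq := eq_of_cross_eq_one_of_dot_mem_Ioo hav hp₁ hdot hpdot
  exact Prod.ext hp₁_eq (by rw [hp₂, hp₁_eq])
end

section
/- Let v, v₋, v₊ ∈ ℤ² with v₋ × v = 1, v × v₊ = 1, v = v₋ + v₊, |v₋| < |v|, |v₊| < |v|. Suppose v₋' ∈ ℤ² also satisfies v₋' × v = 1 and |v₋'| < |v|, and the angle from v₋' to v is strictly between 0 and π. Then v₋' = v₋ or v₋' = −v₊. -/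
/-- Euclidean norm of a vector in ℤ². -/
noncomputable def euclNorm (v : ℤ × ℤ) : ℝ := Real.sqrt ((v.1 : ℝ) ^ 2 + (v.2 : ℝ) ^ 2)

lemma dot_self_nonneg (a : ℤ × ℤ) : 0 ≤ dot a a :=
  add_nonneg (mul_self_nonneg _) (mul_self_nonneg _)

lemma euclNorm_eq_sqrt_dot_self (a : ℤ × ℤ) : euclNorm a = Real.sqrt (dot a a) := by
  simp only [euclNorm, dot]
  push_cast
  ring_nf

lemma euclNorm_lt_euclNorm_iff {a b : ℤ × ℤ} : euclNorm a < euclNorm b ↔ dot a a < dot b b := by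
  rw [euclNorm_eq_sqrt_dot_self, euclNorm_eq_sqrt_dot_self,
    Real.sqrt_lt_sqrt_iff (by exact_mod_cast dot_self_nonneg a), Int.cast_lt]

lemma dot_neg_self (a : ℤ × ℤ) : dot (-a) (-a) = dot a a := by
  simp only [dot, Prod.fst_neg, Prod.snd_neg]
  ring

lemma eq_add_cross_smul_of_cross_eq_one {a b v : ℤ × ℤ} (ha : cross a v = 1)
    (hb : cross b v = 1) : b = a + cross a b • v := by
  unfold cross at *
  refine Prod.ext ?_ ?_ <;> simp only [Prod.fst_add, Prod.snd_add, Prod.smul_fst,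
    Prod.smul_snd, smul_eq_mul]
  · linear_combination a.1 * hb - b.1 * ha
  · linear_combination a.2 * hb - b.2 * ha

lemma dot_pos_of_euclNorm_sub_lt {a v : ℤ × ℤ} (h : euclNorm (v - a) < euclNorm v) :
    0 < dot a v := by
  rw [euclNorm_lt_euclNorm_iff] at h
  simp only [dot, Prod.fst_sub, Prod.snd_sub] at h ⊢
  nlinarith [sq_nonneg a.1, sq_nonneg a.2]

lemma nonpos_of_dot_self_add_smul_lt {a v : ℤ × ℤ} {k : ℤ} (hav : 0 ≤ dot a v)
    (h : dot (a + k • v) (a + k • v) < dot v v) : k ≤ 0 := by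
  by_contra! hk
  have hexpand : dot (a + k • v) (a + k • v) = dot a a + 2 * k * dot a v + k ^ 2 * dot v v := by
    simp only [dot, Prod.fst_add, Prod.snd_add, Prod.smul_fst, Prod.smul_snd, smul_eq_mul]
    ring
  have hk2 : 1 ≤ k ^ 2 := by nlinarith
  nlinarith [mul_nonneg hk.le hav, dot_self_nonneg a, dot_self_nonneg v]

theorem pick_uniqueness_general (v vm vp vm' : ℤ × ℤ)
    (h1 : cross vm v = 1) (h3 : v = vm + vp)
    (h4 : euclNorm vm < euclNorm v) (h5 : euclNorm vp < euclNorm v)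
    (h6 : cross vm' v = 1) (h7 : euclNorm vm' < euclNorm v) :
    vm' = vm ∨ vm' = -vp := by
  set k := cross vm vm'
  have hvm' : vm' = vm + k • v := eq_add_cross_smul_of_cross_eq_one h1 h6
  have hvm : vm = v - vp := eq_sub_of_add_eq h3.symm
  have hvp : vp = v - vm := eq_sub_of_add_eq' h3.symm
  have hvm_acute : 0 < dot vm v := dot_pos_of_euclNorm_sub_lt (by rwa [← hvp])
  have hvp_acute : 0 < dot vp v := dot_pos_of_euclNorm_sub_lt (by rwa [← hvm])
  have hk_le : k ≤ 0 := by
    refine nonpos_of_dot_self_add_smul_lt hvm_acute.le ?_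
    rwa [← hvm', ← euclNorm_lt_euclNorm_iff]
  have hk_ge : -(k + 1) ≤ 0 := by
    refine nonpos_of_dot_self_add_smul_lt hvp_acute.le ?_
    rw [← dot_neg_self, ← euclNorm_lt_euclNorm_iff]
    convert h7 using 2
    rw [hvm', hvm]
    module
  obtain hk | hk : k = 0 ∨ k = -1 := by omega
  · left
    simp [hvm', hk]
  · right
    rw [hvm', hk, hvm]
    module

/-- Uniqueness step of Pick's theorem: if `v₋ × v = 1`, `v × v₊ = 1`, `v = v₋ + v₊`,
`|v₋| < |v|`, `|v₊| < |v|`, and `v₋'` also satisfies `v₋' × v = 1`, `|v₋'| < |v|`, with the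
angle from `v₋'` to `v` strictly between `0` and `π` (i.e. `v₋' × v > 0`), then
`v₋' = v₋` or `v₋' = −v₊`. -/
theorem pick_uniqueness (v vm vp vm' : ℤ × ℤ)
    (h1 : cross vm v = 1) (h2 : cross v vp = 1) (h3 : v = vm + vp)
    (h4 : euclNorm vm < euclNorm v) (h5 : euclNorm vp < euclNorm v)
    (h6 : cross vm' v = 1) (h7 : euclNorm vm' < euclNorm v)
    (hang : 0 < cross vm' v) :
    vm' = vm ∨ vm' = -vp :=
  pick_uniqueness_general v vm vp vm' h1 h3 h4 h5 h6 h7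
end

section
/- Let Q be a non-degenerate bilinear form on Λ ≅ ℤ² satisfying: (a) Q(x,x) ≤ 0 for all x ∈ Λ; (b) there exists D ∈ SL(Λ) (determinant 1 automorphism) such that Q(x,y) = Q(y,Dx) for all x,y ∈ Λ and Dx ≠ ±x for all nonzero x ∈ Λ. Then D has order 3, 4, or 6 as an automorphism of Λ. -/
/-!
Write `Q(x, y) = xᵀ M y`. The identity `Q(x, y) = Q(y, D x)` says `Mᵀ = M D`, hence
`det (M ± Mᵀ) = det M · det (1 ± D) = det M · (2 ± tr D)`. Since `x ↦ Q(x, x)` is negative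
semidefinite, `det (M + Mᵀ) ≥ 0`, while `det (M - Mᵀ)` is a square; as `det M ≠ 0` this forces
`|tr D| ≤ 2`. If `tr D = ±2` then `1 ∓ D` is singular and `D` has an eigenvector with eigenvalue
`±1`, which is excluded. So `tr D ∈ {-1, 0, 1}`, and by Cayley–Hamilton `D² - (tr D) D + 1 = 0`
is the cyclotomic relation of order `3`, `4` or `6`.
-/

open Matrix
open scoped MatrixGroups

namespace Matrix

section BilinearForm

variable {n R : Type*} [Fintype n] [DecidableEq n] [CommRing R]

theorem transpose_eq_mul_of_dotProduct_mulVec_eq {M A : Matrix n n R}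
    (h : ∀ x y : n → R, x ⬝ᵥ M *ᵥ y = y ⬝ᵥ M *ᵥ (A *ᵥ x)) : Mᵀ = M * A := by
  ext i j
  have hij := h (Pi.single j 1) (Pi.single i 1)
  rwa [mulVec_mulVec, single_one_dotProduct, single_one_dotProduct, mulVec_single_one,
    mulVec_single_one] at hij

theorem det_ne_zero_of_dotProduct_mulVec_nondegenerate [IsDomain R] {M : Matrix n n R}
    (h : ∀ x : n → R, (∀ y, x ⬝ᵥ M *ᵥ y = 0) → x = 0) : M.det ≠ 0 := by
  intro hdet
  obtain ⟨v, hv, hvM⟩ := exists_vecMul_eq_zero_iff.mpr hdet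
  exact hv (h v fun y => by rw [dotProduct_mulVec, hvM, zero_dotProduct])

end BilinearForm

section FinTwo

variable {R : Type*} [CommRing R]

theorem sq_eq_trace_smul_sub_det_smul_fin_two (A : Matrix (Fin 2) (Fin 2) R) :
    A ^ 2 = A.trace • A - A.det • 1 := by
  ext i j
  fin_cases i <;> fin_cases j <;> simp [sq, mul_apply, trace_fin_two, det_fin_two] <;> ring

theorem det_one_add_fin_two (A : Matrix (Fin 2) (Fin 2) R) :
    (1 + A).det = 1 + A.trace + A.det := by
  simp [det_fin_two, trace_fin_two]
  ring

theorem det_one_sub_fin_two (A : Matrix (Fin 2) (Fin 2) R) :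
    (1 - A).det = 1 - A.trace + A.det := by
  simp [det_fin_two, trace_fin_two]
  ring

theorem det_sub_transpose_fin_two (M : Matrix (Fin 2) (Fin 2) R) :
    (M - Mᵀ).det = (M 0 1 - M 1 0) ^ 2 := by
  simp [det_fin_two]
  ring

theorem ne_one_of_trace_ne_two_fin_two {A : Matrix (Fin 2) (Fin 2) R} (h : A.trace ≠ 2) :
    A ≠ 1 := by
  rintro rfl
  simp at h

theorem trace_ne_two_of_mulVec_ne_self [IsDomain R] {A : Matrix (Fin 2) (Fin 2) R}
    (hA : A.det = 1) (h : ∀ x ≠ 0, A *ᵥ x ≠ x) : A.trace ≠ 2 := by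
  intro htr
  have hsing : (1 - A).det = 0 := by rw [det_one_sub_fin_two, htr, hA]; ring
  obtain ⟨v, hv, hAv⟩ := exists_mulVec_eq_zero_iff.mpr hsing
  rw [sub_mulVec, one_mulVec, sub_eq_zero] at hAv
  exact h v hv hAv.symm

theorem trace_ne_neg_two_of_mulVec_ne_neg [IsDomain R] {A : Matrix (Fin 2) (Fin 2) R}
    (hA : A.det = 1) (h : ∀ x ≠ 0, A *ᵥ x ≠ -x) : A.trace ≠ -2 := by
  intro htr
  have hsing : (1 + A).det = 0 := by rw [det_one_add_fin_two, htr, hA]; ring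
  obtain ⟨v, hv, hAv⟩ := exists_mulVec_eq_zero_iff.mpr hsing
  rw [add_mulVec, one_mulVec, add_eq_zero_iff_neg_eq] at hAv
  exact h v hv hAv.symm

theorem abs_trace_le_two_of_transpose_eq_mul [LinearOrder R] [IsStrictOrderedRing R]
    {M A : Matrix (Fin 2) (Fin 2) R} (hA : A.det = 1) (hMA : Mᵀ = M * A) (hM : M.det ≠ 0)
    (hadd : 0 ≤ (M + Mᵀ).det) : |A.trace| ≤ 2 := by
  have hplus : (M + Mᵀ).det = M.det * (2 + A.trace) := by
    rw [hMA, show M + M * A = M * (1 + A) by rw [mul_add, mul_one], det_mul,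
      det_one_add_fin_two, hA]
    ring
  have hminus : (M - Mᵀ).det = M.det * (2 - A.trace) := by
    rw [hMA, show M - M * A = M * (1 - A) by rw [mul_sub, mul_one], det_mul,
      det_one_sub_fin_two, hA]
    ring
  have hsub : 0 ≤ (M - Mᵀ).det := det_sub_transpose_fin_two M ▸ sq_nonneg _
  have hMpos : 0 < M.det := hM.symm.lt_of_le (by nlinarith)
  rw [abs_le]
  constructor
  · linarith [nonneg_of_mul_nonneg_right (hplus ▸ hadd) hMpos]
  · linarith [nonneg_of_mul_nonneg_right (hminus ▸ hsub) hMpos]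

end FinTwo

theorem det_add_transpose_nonneg_of_dotProduct_mulVec_self_nonpos
    {M : Matrix (Fin 2) (Fin 2) ℤ} (h : ∀ x, x ⬝ᵥ M *ᵥ x ≤ 0) : 0 ≤ (M + Mᵀ).det := by
  have hq : ∀ u v : ℤ, M 0 0 * u ^ 2 + (M 0 1 + M 1 0) * u * v + M 1 1 * v ^ 2 ≤ 0 := by
    intro u v
    have := h ![u, v]
    simp [dotProduct, mulVec, Fin.sum_univ_two] at this
    linarith
  have ha : M 0 0 ≤ 0 := by simpa using hq 1 0
  have hd : M 1 1 ≤ 0 := by simpa using hq 0 1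
  rw [det_fin_two]
  simp only [add_apply, transpose_apply]
  rcases ha.eq_or_lt with ha | ha
  · -- `u ↦ Q((u, 1), (u, 1))` is affine with slope `M 0 1 + M 1 0`, and bounded above
    have hb : M 0 1 + M 1 0 = 0 := by
      by_contra hb
      have := hq ((M 0 1 + M 1 0) * (1 - M 1 1)) 1
      have : 0 < (M 0 1 + M 1 0) ^ 2 := by positivity
      nlinarith
    nlinarith
  · -- with `a = M 0 0`, `b = M 0 1 + M 1 0`, `d = M 1 1`: `Q` at `(-b, 2a)` is `a (4ad - b²)`
    nlinarith [hq (-(M 0 1 + M 1 0)) (2 * M 0 0)]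

namespace SpecialLinearGroup

variable {R : Type*} [CommRing R]

theorem pow_eq_one_iff_coe {n : Type*} [Fintype n] [DecidableEq n] (A : SpecialLinearGroup n R)
    (k : ℕ) : A ^ k = 1 ↔ (A : Matrix n n R) ^ k = 1 := by
  rw [← coe_pow, ← coe_one]
  exact Subtype.ext_iff

variable [CharZero R] {A : SL(2, R)}

theorem orderOf_eq_three_of_trace_eq_neg_one (h : (A : Matrix (Fin 2) (Fin 2) R).trace = -1) :
    orderOf A = 3 := by
  have hsq := sq_eq_trace_smul_sub_det_smul_fin_two (A : Matrix (Fin 2) (Fin 2) R)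
  rw [h, A.det_coe, neg_one_smul, one_smul] at hsq
  have := Fact.mk Nat.prime_three
  refine orderOf_eq_prime ?_ ?_
  · rw [pow_eq_one_iff_coe, pow_succ, hsq, sub_mul, neg_mul, ← sq, hsq]
    noncomm_ring
  · rintro rfl
    norm_num at h

theorem orderOf_eq_four_of_trace_eq_zero (h : (A : Matrix (Fin 2) (Fin 2) R).trace = 0) :
    orderOf A = 4 := by
  have hsq := sq_eq_trace_smul_sub_det_smul_fin_two (A : Matrix (Fin 2) (Fin 2) R)
  rw [h, A.det_coe, zero_smul, one_smul, zero_sub] at hsq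
  have := Fact.mk Nat.prime_two
  refine orderOf_eq_prime_pow (p := 2) (n := 1) ?_ ?_
  · rw [pow_eq_one_iff_coe, pow_one, hsq]
    exact ne_one_of_trace_ne_two_fin_two (by norm_num)
  · rw [pow_eq_one_iff_coe, show 2 ^ (1 + 1) = 2 * 2 by rfl, pow_mul, hsq]
    noncomm_ring

theorem orderOf_eq_six_of_trace_eq_one (h : (A : Matrix (Fin 2) (Fin 2) R).trace = 1) :
    orderOf A = 6 := by
  have hsq := sq_eq_trace_smul_sub_det_smul_fin_two (A : Matrix (Fin 2) (Fin 2) R)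
  rw [h, A.det_coe, one_smul, one_smul] at hsq
  have hcube : (A : Matrix (Fin 2) (Fin 2) R) ^ 3 = -1 := by
    rw [pow_succ, hsq, sub_mul, ← sq, hsq]
    noncomm_ring
  refine orderOf_eq_of_pow_and_pow_div_prime (by norm_num) ?_ fun p hp hdvd => ?_
  · rw [pow_eq_one_iff_coe, show 6 = 3 * 2 by rfl, pow_mul, hcube]
    noncomm_ring
  obtain rfl | rfl : p = 2 ∨ p = 3 := by
    have : p ≤ 6 := Nat.le_of_dvd (by norm_num) hdvd
    interval_cases p <;> simp_all +decide
  · rw [Ne, pow_eq_one_iff_coe, show 6 / 2 = 3 by rfl, hcube]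
    exact ne_one_of_trace_ne_two_fin_two (by norm_num)
  · rw [Ne, pow_eq_one_iff_coe, show 6 / 3 = 2 by rfl, hsq]
    exact ne_one_of_trace_ne_two_fin_two (by norm_num [h])

theorem orderOf_eq_three_or_four_or_six_of_abs_trace_lt_two {A : SL(2, ℤ)}
    (h : |(A : Matrix (Fin 2) (Fin 2) ℤ).trace| < 2) :
    orderOf A = 3 ∨ orderOf A = 4 ∨ orderOf A = 6 := by
  obtain h | h | h : (A : Matrix (Fin 2) (Fin 2) ℤ).trace = -1 ∨
      (A : Matrix (Fin 2) (Fin 2) ℤ).trace = 0 ∨ (A : Matrix (Fin 2) (Fin 2) ℤ).trace = 1 := by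
    rw [abs_lt] at h
    omega
  · exact .inl (orderOf_eq_three_of_trace_eq_neg_one h)
  · exact .inr (.inl (orderOf_eq_four_of_trace_eq_zero h))
  · exact .inr (.inr (orderOf_eq_six_of_trace_eq_one h))

end SpecialLinearGroup

end Matrix

/-- Let `Q` be a non-degenerate bilinear form on `Λ ≅ ℤ²` (given by a matrix `M`, via
`Q(x,y) = x ⬝ᵥ M *ᵥ y`) with `Q(x,x) ≤ 0` for all `x`, admitting `D ∈ SL(Λ)` such that
`Q(x,y) = Q(y,Dx)` for all `x, y`, and `Dx ≠ ±x` for all nonzero `x`. Then `D` has order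
`3`, `4`, or `6`. -/
theorem serre_isometry_order (M : Matrix (Fin 2) (Fin 2) ℤ)
    (hnd : ∀ x : Fin 2 → ℤ, (∀ y : Fin 2 → ℤ, x ⬝ᵥ M.mulVec y = 0) → x = 0)
    (hneg : ∀ x : Fin 2 → ℤ, x ⬝ᵥ M.mulVec x ≤ 0)
    (D : Matrix.SpecialLinearGroup (Fin 2) ℤ)
    (hadj : ∀ x y : Fin 2 → ℤ,
      x ⬝ᵥ M.mulVec y = y ⬝ᵥ M.mulVec ((D : Matrix (Fin 2) (Fin 2) ℤ).mulVec x))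
    (hfix : ∀ x : Fin 2 → ℤ, x ≠ 0 →
      (D : Matrix (Fin 2) (Fin 2) ℤ).mulVec x ≠ x ∧
      (D : Matrix (Fin 2) (Fin 2) ℤ).mulVec x ≠ -x) :
    orderOf D = 3 ∨ orderOf D = 4 ∨ orderOf D = 6 := by
  have hle : |(D : Matrix (Fin 2) (Fin 2) ℤ).trace| ≤ 2 :=
    abs_trace_le_two_of_transpose_eq_mul D.det_coe (transpose_eq_mul_of_dotProduct_mulVec_eq hadj)
      (det_ne_zero_of_dotProduct_mulVec_nondegenerate hnd)
      (det_add_transpose_nonneg_of_dotProduct_mulVec_self_nonpos hneg)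
  have hne_two := trace_ne_two_of_mulVec_ne_self D.det_coe fun x hx => (hfix x hx).1
  have hne_neg_two := trace_ne_neg_two_of_mulVec_ne_neg D.det_coe fun x hx => (hfix x hx).2
  refine SpecialLinearGroup.orderOf_eq_three_or_four_or_six_of_abs_trace_lt_two ?_
  rw [abs_le] at hle
  rw [abs_lt]
  omega
end

section
/- Let Q be a non-degenerate bilinear form on ℤ² admitting D ∈ SL₂(ℤ) with Q(x,y)=Q(y,Dx) for all x,y and Dx ≠ ±x for all nonzero x, and Q(x,x) ≤ 0 for all x. Then there exists an oriented ℤ-basis of ℤ² in which the matrix of Q equals one of: (−n, ±n; 0, −n), (−n, ±n; ∓n, −n), or (−n, ±n; ∓2n, −n) for some integer n ≥ 1. -/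
/-!
Adjointness says `M * D = Mᵀ`, so `M * (D - 1) = Mᵀ - M = (M₀₁ - M₁₀) • J` with
`J = !![0, -1; 1, 0]`. Multiplying by the adjugate gives `k • M = (M₀₁ - M₁₀) • N` with
`k = det (D - 1) = 2 - tr D` and `N = J * adj (D - 1)`, an integral matrix with
`det N = N₀₁ - N₁₀ = k`. Taking determinants, `k det M = (M₀₁ - M₁₀)²`, while semidefiniteness
gives `(M₀₁ - M₁₀)² ≤ 4 det M`; as `D` has no eigenvalue `±1`, `k ≠ 0, 4`, so `k ∈ {1, 2, 3}`.
Being squarefree, `k` divides `M₀₁ - M₁₀`, and `M = e • N`. The symmetric part of `N` is a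
definite binary quadratic form of discriminant `k² - 4k ∈ {-3, -4}`; Gauss reduction by oriented
base changes (which preserve `det N` and `N₀₁ - N₁₀`) brings it to `N₀₀ = N₁₁ = ±1`, and then `N`
is the normal form up to one shear.
-/

open Matrix

def SLCongr {n R : Type*} [Fintype n] [DecidableEq n] [CommRing R] (A B : Matrix n n R) : Prop :=
  ∃ P : Matrix n n R, P.det = 1 ∧ Pᵀ * A * P = B

namespace SLCongr

variable {n R : Type*} [Fintype n] [DecidableEq n] [CommRing R] {A B C : Matrix n n R}

theorem refl (A : Matrix n n R) : SLCongr A A := ⟨1, det_one, by simp⟩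

theorem trans (hAB : SLCongr A B) (hBC : SLCongr B C) : SLCongr A C := by
  obtain ⟨P, hP, rfl⟩ := hAB
  obtain ⟨Q, hQ, rfl⟩ := hBC
  exact ⟨P * Q, by rw [det_mul, hP, hQ, one_mul], by simp only [transpose_mul, Matrix.mul_assoc]⟩

theorem neg_transpose (h : SLCongr A B) : SLCongr (-Aᵀ) (-Bᵀ) := by
  obtain ⟨P, hP, rfl⟩ := h
  exact ⟨P, hP, by simp only [transpose_mul, transpose_transpose, Matrix.mul_neg, Matrix.neg_mul,
    Matrix.mul_assoc]⟩

theorem det_eq (h : SLCongr A B) : B.det = A.det := by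
  obtain ⟨P, hP, rfl⟩ := h
  rw [det_mul, det_mul, det_transpose, hP, one_mul, mul_one]

end SLCongr

theorem SLCongr.skew_eq {R : Type*} [CommRing R] {A B : Matrix (Fin 2) (Fin 2) R}
    (h : SLCongr A B) : B 0 1 - B 1 0 = A 0 1 - A 1 0 := by
  obtain ⟨P, hP, rfl⟩ := h
  rw [det_fin_two] at hP
  simp only [mul_apply, transpose_apply, Fin.sum_univ_two]
  linear_combination (A 0 1 - A 1 0) * hP

theorem slCongr_shear {R : Type*} [CommRing R] {a b c d b' c' d' : R} (m : R)
    (hb : b' = a * m + b) (hc : c' = a * m + c) (hd : d' = a * m ^ 2 + (b + c) * m + d) :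
    SLCongr !![a, b; c, d] !![a, b'; c', d'] :=
  ⟨!![1, m; 0, 1], by simp [det_fin_two_of], by
    subst hb hc hd
    ext i j
    fin_cases i <;> fin_cases j <;> simp [mul_apply, Fin.sum_univ_two] <;> ring⟩

theorem slCongr_swap {R : Type*} [CommRing R] (a b c d : R) :
    SLCongr !![a, b; c, d] !![d, -c; -b, a] :=
  ⟨!![0, -1; 1, 0], by simp [det_fin_two_of], by
    ext i j; fin_cases i <;> fin_cases j <;> simp [mul_apply, Fin.sum_univ_two]⟩

theorem exists_slCongr_reduced (a b c d : ℤ) (ha : 0 < a) (hdisc : (b + c) ^ 2 < 4 * a * d) :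
    ∃ a' b' c' d' : ℤ, SLCongr !![a, b; c, d] !![a', b'; c', d'] ∧ |b' + c'| ≤ a' ∧ a' ≤ d' := by
  have hd : 0 < d := by nlinarith [sq_nonneg (b + c)]
  by_cases hlarge : a < b + c
  · obtain ⟨a', b', c', d', h, hred⟩ :=
      exists_slCongr_reduced a (b - a) (c - a) (d - (b + c) + a) ha (by linear_combination hdisc)
    exact ⟨a', b', c', d', (slCongr_shear (-1) (by ring) (by ring) (by ring)).trans h, hred⟩
  by_cases hsmall : b + c < -a
  · obtain ⟨a', b', c', d', h, hred⟩ :=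
      exists_slCongr_reduced a (b + a) (c + a) (d + (b + c) + a) ha (by linear_combination hdisc)
    exact ⟨a', b', c', d', (slCongr_shear 1 (by ring) (by ring) (by ring)).trans h, hred⟩
  by_cases hswap : d < a
  · obtain ⟨a', b', c', d', h, hred⟩ :=
      exists_slCongr_reduced d (-c) (-b) a hd (by linear_combination hdisc)
    exact ⟨a', b', c', d', (slCongr_swap a b c d).trans h, hred⟩
  exact ⟨a, b, c, d, .refl _, abs_le.2 ⟨by omega, by omega⟩, by omega⟩
termination_by (2 * a + d).toNat
decreasing_by all_goals omega

theorem slCongr_of_pos {k : ℤ} (hk0 : 0 < k) (hk4 : k < 4) {N : Matrix (Fin 2) (Fin 2) ℤ}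
    (hN : 0 < N 0 0) (hdet : N.det = k) (hskew : N 0 1 - N 1 0 = k) :
    SLCongr N !![1, 1; 1 - k, 1] := by
  rw [det_fin_two] at hdet
  obtain ⟨a, b, c, d, hNr, hred, had⟩ := exists_slCongr_reduced (N 0 0) (N 0 1) (N 1 0) (N 1 1) hN
    (by nlinarith)
  rw [← eta_fin_two N] at hNr
  have hdet' := hNr.det_eq
  have hskew' := hNr.skew_eq
  simp only [det_fin_two_of, of_apply, cons_val', cons_val_zero, cons_val_one, empty_val',
    cons_val_fin_one] at hdet' hskew'
  rw [det_fin_two, hdet] at hdet'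
  rw [hskew] at hskew'
  obtain ⟨hbc_lo, hbc_hi⟩ := abs_le.1 hred
  obtain rfl : a = 1 := by nlinarith
  obtain rfl : d = 1 := by nlinarith
  have hb : (b - 1) * (b - (k - 1)) = 0 := by linear_combination b * hskew' - hdet'
  rcases mul_eq_zero.1 hb with hb1 | hbk
  · obtain rfl : b = 1 := by linarith [hb1]
    obtain rfl : c = 1 - k := by linarith
    exact hNr
  · obtain rfl : b = k - 1 := by linarith [hbk]
    obtain rfl : c = -1 := by linarith
    exact hNr.trans (slCongr_shear (2 - k) (by ring) (by ring) (by ring))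

theorem slCongr_of_neg {k : ℤ} (hk0 : 0 < k) (hk4 : k < 4) {N : Matrix (Fin 2) (Fin 2) ℤ}
    (hN : N 0 0 < 0) (hdet : N.det = k) (hskew : N 0 1 - N 1 0 = k) :
    SLCongr N !![-1, 1; 1 - k, -1] := by
  have h := (slCongr_of_pos (N := -Nᵀ) hk0 hk4 (by simpa using hN) (by simpa [det_neg] using hdet)
    (by simp only [neg_apply, transpose_apply]; linarith)).neg_transpose
  rw [transpose_neg, transpose_transpose, neg_neg] at h
  have hF : -(!![1, 1; 1 - k, 1])ᵀ = !![-1, k - 1; -1, -1] := by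
    ext i j; fin_cases i <;> fin_cases j <;> simp
  rw [hF] at h
  exact h.trans (slCongr_shear (k - 2) (by ring) (by ring) (by ring))

theorem slCongr_of_mul_neg {k σ : ℤ} (hk0 : 0 < k) (hk4 : k < 4) (hσ : σ = 1 ∨ σ = -1)
    {N : Matrix (Fin 2) (Fin 2) ℤ} (hN : σ * N 0 0 < 0) (hdet : N.det = k)
    (hskew : N 0 1 - N 1 0 = k) : SLCongr N !![-σ, 1; 1 - k, -σ] := by
  rcases hσ with rfl | rfl
  · exact slCongr_of_neg hk0 hk4 (by simpa using hN) hdet hskew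
  · simpa using slCongr_of_pos hk0 hk4 (by simpa using hN) hdet hskew

theorem mul_eq_transpose_of_dotProduct_mulVec_eq {n R : Type*} [Fintype n] [DecidableEq n]
    [CommRing R] {M D : Matrix n n R}
    (h : ∀ x y : n → R, x ⬝ᵥ M *ᵥ y = y ⬝ᵥ M *ᵥ (D *ᵥ x)) : M * D = Mᵀ := by
  ext i j
  have := h (Pi.single j 1) (Pi.single i 1)
  simp only [mulVec_single, MulOpposite.op_one, one_smul, single_dotProduct, col_apply,
    one_mul] at this
  exact this.symm

theorem exists_mulVec_eq_smul_of_det_eq_zero {n R : Type*} [Fintype n] [DecidableEq n]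
    [CommRing R] [IsDomain R] {D : Matrix n n R} {μ : R} (h : (D - μ • 1).det = 0) :
    ∃ v ≠ 0, D *ᵥ v = μ • v := by
  obtain ⟨v, hv, hDv⟩ := exists_mulVec_eq_zero_iff.2 h
  exact ⟨v, hv, by rwa [sub_mulVec, smul_mulVec, one_mulVec, sub_eq_zero] at hDv⟩

theorem det_add_one_add_det_sub_one {R : Type*} [CommRing R] (D : Matrix (Fin 2) (Fin 2) R) :
    (D + 1).det + (D - 1).det = 2 * D.det + 2 := by
  simp only [det_fin_two, Matrix.add_apply, Matrix.sub_apply, one_apply_eq,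
    one_apply_ne zero_ne_one, one_apply_ne one_ne_zero]
  ring

theorem sq_add_le_four_mul_of_forall_nonpos {R : Type*} [CommRing R] [LinearOrder R]
    [IsStrictOrderedRing R] {M : Matrix (Fin 2) (Fin 2) R} (h : ∀ x, x ⬝ᵥ M *ᵥ x ≤ 0) :
    (M 0 1 + M 1 0) ^ 2 ≤ 4 * M 0 0 * M 1 1 := by
  have hq : ∀ x y : R, M 0 0 * x ^ 2 + (M 0 1 + M 1 0) * x * y + M 1 1 * y ^ 2 ≤ 0 := by
    intro x y
    have := h ![x, y]
    simp only [dotProduct, mulVec, Fin.sum_univ_two, cons_val_zero, cons_val_one,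
      cons_val_fin_one] at this
    linear_combination this
  have ha : M 0 0 ≤ 0 := by simpa using hq 1 0
  have hd : M 1 1 ≤ 0 := by simpa using hq 0 1
  rcases ha.lt_or_eq with ha | ha
  · nlinarith [hq (M 0 1 + M 1 0) (-2 * M 0 0)]
  rcases hd.lt_or_eq with hd | hd
  · nlinarith [hq (-2 * M 1 1) (M 0 1 + M 1 0)]
  nlinarith [hq (M 0 1 + M 1 0) 1]

theorem exists_smul_eq_smul_of_mul_eq_transpose {R : Type*} [CommRing R]
    {M D : Matrix (Fin 2) (Fin 2) R} (hD : D.det = 1) (h : M * D = Mᵀ) :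
    ∃ N : Matrix (Fin 2) (Fin 2) R, N.det = (D - 1).det ∧ N 0 1 - N 1 0 = (D - 1).det ∧
      (D - 1).det • M = (M 0 1 - M 1 0) • N := by
  have hskew : M * (D - 1) = (M 0 1 - M 1 0) • !![0, -1; 1, 0] := by
    rw [mul_sub, h, mul_one]
    ext i j; fin_cases i <;> fin_cases j <;> simp
  refine ⟨!![0, -1; 1, 0] * (D - 1).adjugate, ?_, ?_, ?_⟩
  · rw [det_mul, det_adjugate, det_fin_two_of]; simp
  · rw [det_fin_two] at hD
    simp only [adjugate_fin_two, det_fin_two, mul_apply, Fin.sum_univ_two, Matrix.sub_apply,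
      one_apply_eq, one_apply_ne zero_ne_one, one_apply_ne one_ne_zero, of_apply, cons_val',
      cons_val_zero, cons_val_one, empty_val', cons_val_fin_one]
    linear_combination -hD
  · rw [← smul_mul_assoc, ← hskew, Matrix.mul_assoc, mul_adjugate, mul_smul_one]

theorem Int.dvd_of_dvd_sq_of_pos_of_lt_four {k β : ℤ} (hk0 : 0 < k) (hk4 : k < 4) (h : k ∣ β ^ 2) :
    k ∣ β := by
  interval_cases k
  · exact one_dvd β
  · exact Int.prime_two.dvd_of_dvd_pow h
  · exact Int.prime_three.dvd_of_dvd_pow h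

theorem pos_and_lt_four_of_mul_eq_sq {R : Type*} [CommRing R] [LinearOrder R]
    [IsStrictOrderedRing R] {k Δ β : R} (hΔ : Δ ≠ 0) (hk0 : k ≠ 0) (hk4 : k ≠ 4)
    (hkΔ : k * Δ = β ^ 2) (hdisc : β ^ 2 ≤ 4 * Δ) : 0 < k ∧ k < 4 := by
  have hΔpos : 0 < Δ := lt_of_le_of_ne (by nlinarith [sq_nonneg β]) hΔ.symm
  refine ⟨pos_of_mul_pos_left (hkΔ ▸ lt_of_le_of_ne (sq_nonneg β) ?_) hΔpos.le,
    lt_of_le_of_ne (le_of_mul_le_mul_right (by linarith) hΔpos) hk4⟩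
  rw [← hkΔ]
  exact (mul_ne_zero hk0 hΔ).symm

theorem exists_eq_smul_det_eq_skew {M D : Matrix (Fin 2) (Fin 2) ℤ} (hM : M.det ≠ 0)
    (hneg : ∀ x, x ⬝ᵥ M *ᵥ x ≤ 0) (hD : D.det = 1) (h : M * D = Mᵀ) (hD1 : (D - 1).det ≠ 0)
    (hD1' : (D + 1).det ≠ 0) :
    ∃ k e : ℤ, ∃ N : Matrix (Fin 2) (Fin 2) ℤ, 0 < k ∧ k < 4 ∧ N.det = k ∧ N 0 1 - N 1 0 = k ∧
      e * N 0 0 < 0 ∧ M = e • N := by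
  obtain ⟨N, hNdet, hNskew, hMN⟩ := exists_smul_eq_smul_of_mul_eq_transpose hD h
  set k := (D - 1).det
  set β := M 0 1 - M 1 0
  have hkΔ : k * M.det = β ^ 2 := by
    have := congrArg det hMN
    rw [det_smul, det_smul, hNdet] at this
    simp only [Fintype.card_fin] at this
    exact mul_left_cancel₀ hD1 (by linear_combination this)
  have hdisc : β ^ 2 ≤ 4 * M.det := by
    have := sq_add_le_four_mul_of_forall_nonpos hneg
    rw [det_fin_two]
    linarith
  have hk4 : k ≠ 4 := by
    have := det_add_one_add_det_sub_one D
    rw [hD] at this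
    intro hk
    exact hD1' (by linarith)
  obtain ⟨hk0, hk4⟩ := pos_and_lt_four_of_mul_eq_sq hM hD1 hk4 hkΔ hdisc
  obtain ⟨e, he⟩ := Int.dvd_of_dvd_sq_of_pos_of_lt_four hk0 hk4 ⟨M.det, hkΔ.symm⟩
  have hMe : M = e • N :=
    smul_right_injective _ hD1 <| show k • M = k • e • N by rw [hMN, he, mul_smul]
  refine ⟨k, e, N, hk0, hk4, hNdet, hNskew, ?_, hMe⟩
  have he0 : e ≠ 0 := by
    rintro rfl
    simp [hMe] at hM
  have hN00 : N 0 0 ≠ 0 := by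
    intro h0
    rw [det_fin_two, h0] at hNdet
    nlinarith [sq_nonneg (N 0 1 + N 1 0)]
  have hM00 : M 0 0 ≤ 0 := by simpa using hneg (Pi.single 0 1)
  rw [hMe] at hM00
  exact lt_of_le_of_ne (by simpa using hM00) (mul_ne_zero he0 hN00)

theorem smul_normalForm_eq {σ n k : ℤ} (hσ : σ = 1 ∨ σ = -1) (hk : k = 1 ∨ k = 2 ∨ k = 3) :
    (σ * n) • !![-σ, 1; 1 - k, -σ] = !![-n, σ * n; 0, -n] ∨
      (σ * n) • !![-σ, 1; 1 - k, -σ] = !![-n, σ * n; -σ * n, -n] ∨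
      (σ * n) • !![-σ, 1; 1 - k, -σ] = !![-n, σ * n; -2 * σ * n, -n] := by
  have hF : (σ * n) • !![-σ, 1; 1 - k, -σ] = !![-n, σ * n; (1 - k) * σ * n, -n] := by
    rcases hσ with rfl | rfl <;> ext i j <;> fin_cases i <;> fin_cases j <;> simp <;> ring
  rw [hF]
  rcases hk with rfl | rfl | rfl
  · left; congr; ring
  · right; left; congr; ring
  · right; right; congr

/-- Let `Q` be a non-degenerate bilinear form on `ℤ²` (given by the matrix `M`, via
`Q(x,y) = x ⬝ᵥ M *ᵥ y`) with `Q(x,x) ≤ 0` for all `x`, admitting `D ∈ SL₂(ℤ)` with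
`Q(x,y) = Q(y,Dx)` for all `x,y` and `Dx ≠ ±x` for all nonzero `x`. Then in a suitable
oriented ℤ-basis (change of basis matrix `P` with `det P = 1`) the matrix of `Q` is one of
`(−n, ±n; 0, −n)`, `(−n, ±n; ∓n, −n)`, `(−n, ±n; ∓2n, −n)` for some `n ≥ 1`. -/
theorem euler_form_normal_form (M : Matrix (Fin 2) (Fin 2) ℤ)
    (hnd : ∀ x : Fin 2 → ℤ, (∀ y : Fin 2 → ℤ, x ⬝ᵥ M.mulVec y = 0) → x = 0)
    (hneg : ∀ x : Fin 2 → ℤ, x ⬝ᵥ M.mulVec x ≤ 0)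
    (D : Matrix.SpecialLinearGroup (Fin 2) ℤ)
    (hadj : ∀ x y : Fin 2 → ℤ,
      x ⬝ᵥ M.mulVec y = y ⬝ᵥ M.mulVec ((D : Matrix (Fin 2) (Fin 2) ℤ).mulVec x))
    (hfix : ∀ x : Fin 2 → ℤ, x ≠ 0 →
      (D : Matrix (Fin 2) (Fin 2) ℤ).mulVec x ≠ x ∧
      (D : Matrix (Fin 2) (Fin 2) ℤ).mulVec x ≠ -x) :
    ∃ P : Matrix (Fin 2) (Fin 2) ℤ, P.det = 1 ∧
      ∃ n : ℤ, 1 ≤ n ∧ ∃ ε : ℤ, (ε = 1 ∨ ε = -1) ∧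
        (Pᵀ * M * P = !![-n, ε * n; 0, -n] ∨
         Pᵀ * M * P = !![-n, ε * n; -ε * n, -n] ∨
         Pᵀ * M * P = !![-n, ε * n; -2 * ε * n, -n]) := by
  have hM : M.det ≠ 0 := fun h ↦ by
    obtain ⟨x, hx, hxM⟩ := exists_vecMul_eq_zero_iff.2 h
    exact hx (hnd x fun y ↦ by rw [dotProduct_mulVec, hxM, zero_dotProduct])
  have hD1 : ((D : Matrix (Fin 2) (Fin 2) ℤ) - 1).det ≠ 0 := fun h ↦ by
    obtain ⟨x, hx, hDx⟩ := exists_mulVec_eq_smul_of_det_eq_zero (μ := (1 : ℤ)) (by simpa using h)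
    exact (hfix x hx).1 (by simpa using hDx)
  have hD1' : ((D : Matrix (Fin 2) (Fin 2) ℤ) + 1).det ≠ 0 := fun h ↦ by
    obtain ⟨x, hx, hDx⟩ := exists_mulVec_eq_smul_of_det_eq_zero (μ := (-1 : ℤ)) (by simpa using h)
    exact (hfix x hx).2 (by simpa using hDx)
  obtain ⟨k, e, N, hk0, hk4, hNdet, hNskew, heN, rfl⟩ := exists_eq_smul_det_eq_skew hM hneg D.2
    (mul_eq_transpose_of_dotProduct_mulVec_eq hadj) hD1 hD1'
  obtain ⟨σ, n, hσ, hn, rfl⟩ : ∃ σ n : ℤ, (σ = 1 ∨ σ = -1) ∧ 1 ≤ n ∧ e = σ * n := by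
    rcases lt_or_gt_of_ne (left_ne_zero_of_mul heN.ne) with he | he
    · exact ⟨-1, -e, .inr rfl, by omega, by ring⟩
    · exact ⟨1, e, .inl rfl, by omega, by ring⟩
  obtain ⟨P, hP, hPN⟩ := slCongr_of_mul_neg hk0 hk4 hσ (by nlinarith) hNdet hNskew
  refine ⟨P, hP, n, hn, σ, hσ, ?_⟩
  rw [Matrix.mul_smul, Matrix.smul_mul, hPN]
  exact smul_normalForm_eq hσ (by omega)
end

section
/- Let Q be the bilinear form on ℤ² with matrix (−1, 1; 0, −1) (i.e., Q((a,b),(c,d)) = −ac + ad − bd). Let v ∈ ℤ² be primitive with Q(v,v) < −1, and let v₊, v₋ be the unique pair with v₋ × v = v × v₊ = v₋ × v₊ = 1 and |v₊|,|v₋| < |v|. Then Q(v₊, v₋) < 0. -/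
/-- The bilinear form with matrix `(−1, 1; 0, −1)`: `Q((a,b),(c,d)) = −ac + ad − bd`. -/
def QIplus (v w : ℤ × ℤ) : ℤ := -(v.1 * w.1) + v.1 * w.2 - v.2 * w.2

lemma enorm_lt_enorm_iff_s5 {v w : ℤ × ℤ} : _root_.enorm v < _root_.enorm w ↔ dot v v < dot w w := by
  rw [_root_.enorm, _root_.enorm, Real.sqrt_lt_sqrt_iff (by positivity), dot, dot, ← sq, ← sq,
    ← sq, ← sq]
  exact_mod_cast Iff.rfl

lemma cross_smul_eq_add (u v w : ℤ × ℤ) : cross u w • v = cross v w • u + cross u v • w := by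
  ext <;> simp only [cross, Prod.smul_fst, Prod.smul_snd, Prod.fst_add, Prod.snd_add,
    smul_eq_mul] <;> ring

lemma eq_add_of_cross_eq_one_s5 {u v w : ℤ × ℤ} (huv : cross u v = 1) (hvw : cross v w = 1)
    (huw : cross u w = 1) : v = u + w := by
  simpa [huv, hvw, huw] using cross_smul_eq_add u v w

lemma dot_add_add (u w : ℤ × ℤ) : dot (u + w) (u + w) = dot u u + 2 * dot u w + dot w w := by
  simp only [dot, Prod.fst_add, Prod.snd_add]; ring

lemma dot_self_mul_dot_self (u w : ℤ × ℤ) : dot u u * dot w w = dot u w ^ 2 + cross u w ^ 2 := by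
  simp only [dot, cross]; ring

lemma dot_nonneg_of_lt_dot_add {u w : ℤ × ℤ} (hc : cross u w = 1)
    (hu : dot u u < dot (u + w) (u + w)) (hw : dot w w < dot (u + w) (u + w)) : 0 ≤ dot u w := by
  have hlag := dot_self_mul_dot_self u w
  rw [dot_add_add] at hu hw
  rw [hc] at hlag
  by_contra! hneg
  have hu' : 1 - 2 * dot u w ≤ dot u u := by linarith
  have hw' : 1 - 2 * dot u w ≤ dot w w := by linarith
  nlinarith [mul_le_mul hu' hw' (by linarith) (by linarith)]

lemma QIplus_swap_eq (u w : ℤ × ℤ) : QIplus w u = u.2 * w.1 - dot u w := by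
  simp only [QIplus, dot]; ring

lemma snd_mul_fst_lt_dot {u w : ℤ × ℤ} (hc : cross u w = 1) (hd : 0 ≤ dot u w)
    (hv : QIplus (u + w) (u + w) < -1) : u.2 * w.1 < dot u w := by
  obtain ⟨p, q⟩ := u
  obtain ⟨r, s⟩ := w
  simp only [cross, dot, QIplus, Prod.fst_add, Prod.snd_add] at *
  have hamgm : 4 * (q * r) * (q * r + 1) ≤ (p * r + q * s) ^ 2 := by
    nlinarith [sq_nonneg (p * r - q * s), congrArg (· * (q * r)) hc]
  rcases lt_trichotomy (q * r) 0 with hneg | hzero | hpos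
  · linarith
  · by_contra! hle
    have hps : p * s = 1 := by linarith
    obtain ⟨rfl, rfl⟩ | ⟨rfl, rfl⟩ := Int.eq_one_or_neg_one_of_mul_eq_one' hps <;>
      nlinarith [sq_nonneg q, sq_nonneg r]
  · nlinarith

theorem Iplus_chi_neg_general (v vm vp : ℤ × ℤ)
    (hQ : QIplus v v < -1)
    (h1 : cross vm v = 1) (h2 : cross v vp = 1) (h3 : cross vm vp = 1)
    (h4 : _root_.enorm vp < _root_.enorm v) (h5 : _root_.enorm vm < _root_.enorm v) :
    QIplus vp vm < 0 := by
  obtain rfl := eq_add_of_cross_eq_one_s5 h1 h2 h3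
  rw [enorm_lt_enorm_iff_s5] at h4 h5
  have hd := dot_nonneg_of_lt_dot_add h3 h5 h4
  rw [QIplus_swap_eq, sub_neg]
  exact snd_mul_fst_lt_dot h3 hd hQ

/-- For the form `I₊` with `n = 1`: if `v` is primitive with `Q(v,v) < −1` and `(v₋, v₊)` is
the unique pair with `v₋ × v = v × v₊ = v₋ × v₊ = 1` and `|v₊|, |v₋| < |v|`, then
`Q(v₊, v₋) < 0`. -/
theorem Iplus_chi_neg (v vm vp : ℤ × ℤ) (hprim : IsPrimitive v)
    (hQ : QIplus v v < -1)
    (h1 : cross vm v = 1) (h2 : cross v vp = 1) (h3 : cross vm vp = 1)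
    (h4 : _root_.enorm vp < _root_.enorm v) (h5 : _root_.enorm vm < _root_.enorm v) :
    QIplus vp vm < 0 :=
  Iplus_chi_neg_general v vm vp hQ h1 h2 h3 h4 h5
end

section
/- Let Q be the bilinear form on ℤ² given by Q((a,b),(c,d)) = −ac − ad − bd (matrix (−1,−1;0,−1)). Then the only primitive vectors v = (a,b) with b ≥ 0, satisfying Q(v₊,v₋) ≥ 0 for the canonical decomposition v = v₋ + v₊ (with v₋ × v = v × v₊ = v₋ × v₊ = 1 and |v₊|,|v₋|<|v|), are v = (1,1), (−1,1), (−2,1), (−1,2), all of which satisfy Q(v,v) ≥ −3. -/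
/-- Euclidean norm of a vector in ℤ². -/
noncomputable def euclNormZ2 (v : ℤ × ℤ) : ℝ := Real.sqrt ((v.1 : ℝ) ^ 2 + (v.2 : ℝ) ^ 2)

/-- The bilinear form with matrix `(−1, −1; 0, −1)`: `Q((a,b),(c,d)) = −ac − ad − bd`. -/
def QIminus (v w : ℤ × ℤ) : ℤ := -(v.1 * w.1) - v.1 * w.2 - v.2 * w.2

/-!
`-Q(x,x) = a² + ab + b²` is positive definite. Write `v = u + w` with `u × w = 1`. The Lagrange
identity `|u|²|w|² = (u·w)² + 1` together with `|u|, |w| < |u + w|` forces `u·w ≥ 0`. If `u·w = 0`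
then `|u| = |w| = 1`, so `|v|² = 2` and `-Q(v,v) ≤ 3|v|²/2 = 3`. If `u·w ≥ 1`, the hypothesis
`Q(w,u) ≥ 0` forces `Q(w,u) = 0`; then the discriminant identity
`4 Q(u,u) Q(w,w) = (Q(u,w) + Q(w,u))² + 3 (u × w)²` gives `Q(u,u) = Q(w,w) = -1` and `Q(v,v) = -3`.
In both cases `-Q(v,v) ≤ 3`, which leaves finitely many `v`.
-/

def sqNormZ2 (v : ℤ × ℤ) : ℤ := v.1 ^ 2 + v.2 ^ 2

def dotZ2 (v w : ℤ × ℤ) : ℤ := v.1 * w.1 + v.2 * w.2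

lemma euclNormZ2_eq_sqrt_sqNormZ2 (v : ℤ × ℤ) : euclNormZ2 v = Real.sqrt (sqNormZ2 v) := by
  simp [euclNormZ2, sqNormZ2]

lemma euclNormZ2_lt_euclNormZ2_iff {v w : ℤ × ℤ} :
    euclNormZ2 v < euclNormZ2 w ↔ sqNormZ2 v < sqNormZ2 w := by
  rw [euclNormZ2_eq_sqrt_sqNormZ2, euclNormZ2_eq_sqrt_sqNormZ2,
    Real.sqrt_lt_sqrt_iff (by unfold sqNormZ2; positivity), Int.cast_lt]

lemma one_lt_euclNormZ2_iff {v : ℤ × ℤ} : 1 < euclNormZ2 v ↔ 1 < sqNormZ2 v := by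
  rw [euclNormZ2_eq_sqrt_sqNormZ2, Real.lt_sqrt zero_le_one, one_pow]
  norm_cast

lemma sqNormZ2_add (u w : ℤ × ℤ) : sqNormZ2 (u + w) = sqNormZ2 u + sqNormZ2 w + 2 * dotZ2 u w := by
  simp only [sqNormZ2, dotZ2, Prod.fst_add, Prod.snd_add]; ring

lemma sqNormZ2_mul_sqNormZ2 (u w : ℤ × ℤ) :
    sqNormZ2 u * sqNormZ2 w = dotZ2 u w ^ 2 + cross u w ^ 2 := by
  simp only [sqNormZ2, dotZ2, cross]; ring

lemma QIminus_sub_QIminus (u w : ℤ × ℤ) : QIminus u w - QIminus w u = -cross u w := by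
  simp only [QIminus, cross]; ring

lemma QIminus_add_add (u w : ℤ × ℤ) :
    QIminus (u + w) (u + w) = QIminus u u + QIminus w w + (QIminus u w + QIminus w u) := by
  simp only [QIminus, Prod.fst_add, Prod.snd_add]; ring

lemma four_mul_QIminus_self_mul_QIminus_self (u w : ℤ × ℤ) :
    4 * (QIminus u u * QIminus w w) = (QIminus u w + QIminus w u) ^ 2 + 3 * cross u w ^ 2 := by
  simp only [QIminus, cross]; ring

lemma QIminus_self_neg {u : ℤ × ℤ} (hu : u ≠ 0) : QIminus u u < 0 := by
  obtain ⟨a, b⟩ := u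
  simp only [QIminus]
  by_contra! hnonneg
  have hb : b = 0 := by nlinarith [sq_nonneg (2 * a + b)]
  have ha : a = 0 := by subst hb; nlinarith
  exact hu (by rw [ha, hb]; rfl)

lemma neg_three_mul_sqNormZ2_le_two_mul_QIminus_self (v : ℤ × ℤ) :
    -3 * sqNormZ2 v ≤ 2 * QIminus v v := by
  simp only [sqNormZ2, QIminus]
  nlinarith [sq_nonneg (v.1 - v.2)]

section Unimodular

variable {u w : ℤ × ℤ} (h : cross u w = 1)
include h

lemma dotZ2_nonneg (hu : sqNormZ2 u < sqNormZ2 (u + w)) (hw : sqNormZ2 w < sqNormZ2 (u + w)) :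
    0 ≤ dotZ2 u w := by
  rw [sqNormZ2_add] at hu hw
  have hprod := sqNormZ2_mul_sqNormZ2 u w
  rw [h] at hprod
  by_contra! hneg
  -- `|u|², |w|² ≥ 1 - 2 u·w`, so their product exceeds `(u·w)² + 1`.
  nlinarith [mul_le_mul (by linarith : 1 - 2 * dotZ2 u w ≤ sqNormZ2 u)
    (by linarith : 1 - 2 * dotZ2 u w ≤ sqNormZ2 w) (by linarith) (by linarith)]

lemma sqNormZ2_add_eq_two_of_dotZ2_eq_zero (h0 : dotZ2 u w = 0) : sqNormZ2 (u + w) = 2 := by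
  have hprod := sqNormZ2_mul_sqNormZ2 u w
  rw [h, h0] at hprod
  have hu : 0 ≤ sqNormZ2 u := by unfold sqNormZ2; positivity
  have hw : 0 ≤ sqNormZ2 w := by unfold sqNormZ2; positivity
  rw [sqNormZ2_add, h0, Int.eq_one_of_mul_eq_one_right hu (by simpa using hprod),
    Int.eq_one_of_mul_eq_one_left hw (by simpa using hprod)]
  rfl

lemma QIminus_eq_zero_of_one_le_dotZ2 (hI : 1 ≤ dotZ2 u w) (hQ : 0 ≤ QIminus w u) :
    QIminus w u = 0 := by
  obtain ⟨c, d⟩ := u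
  obtain ⟨e, f⟩ := w
  simp only [cross, dotZ2, QIminus] at h hI hQ ⊢
  -- With `p = ce`, `q = df`, `r = de`: `pq = r(r + 1)`, `p + q ≥ 1` and `p + q + r ≤ -1` give
  -- `p, q ≥ 0` and `(p + q)² ≥ 4pq ≥ 4(p + q)(p + q + 1)`, which is absurd.
  have hpq : (c * e) * (d * f) = (d * e) * (d * e + 1) := by linear_combination (d * e) * h
  by_contra hne
  have hB : c * e + d * e + d * f ≤ -1 := by linarith [lt_of_le_of_ne hQ (Ne.symm hne)]
  nlinarith [sq_nonneg (c * e - d * f), mul_nonneg (by linarith : 0 ≤ c * e + d * f - d * e)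
    (by linarith : 0 ≤ -(d * e + c * e + d * f + 1))]

lemma QIminus_add_self_eq_neg_three (hQ : QIminus w u = 0) : QIminus (u + w) (u + w) = -3 := by
  have hsum : QIminus u w + QIminus w u = -1 := by
    linarith [QIminus_sub_QIminus u w]
  have hprod := four_mul_QIminus_self_mul_QIminus_self u w
  rw [hsum, h] at hprod
  have hu := QIminus_self_neg (u := u) (by rintro rfl; simp [cross] at h)
  have hw := QIminus_self_neg (u := w) (by rintro rfl; simp [cross] at h)
  rw [QIminus_add_add, hsum]
  nlinarith

lemma neg_three_le_QIminus_add_self (hu : sqNormZ2 u < sqNormZ2 (u + w))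
    (hw : sqNormZ2 w < sqNormZ2 (u + w)) (hQ : 0 ≤ QIminus w u) :
    -3 ≤ QIminus (u + w) (u + w) := by
  rcases (dotZ2_nonneg h hu hw).eq_or_lt with h0 | hpos
  · have := neg_three_mul_sqNormZ2_le_two_mul_QIminus_self (u + w)
    rw [sqNormZ2_add_eq_two_of_dotZ2_eq_zero h h0.symm] at this
    linarith
  · rw [QIminus_add_self_eq_neg_three h (QIminus_eq_zero_of_one_le_dotZ2 h hpos hQ)]

end Unimodular

lemma eq_of_neg_three_le_QIminus_self {v : ℤ × ℤ} (hb : 0 ≤ v.2) (hn : 1 < sqNormZ2 v)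
    (hQ : -3 ≤ QIminus v v) : v = (1, 1) ∨ v = (-1, 1) ∨ v = (-2, 1) ∨ v = (-1, 2) := by
  obtain ⟨a, b⟩ := v
  simp only [sqNormZ2, QIminus] at hb hn hQ
  have hb2 : b ≤ 2 := by nlinarith [sq_nonneg (2 * a + b)]
  have ha : -2 ≤ a ∧ a ≤ 1 := by constructor <;> nlinarith [sq_nonneg (2 * a + b)]
  obtain ⟨ha1, ha2⟩ := ha
  interval_cases a <;> interval_cases b <;> simp_all

theorem Iminus_exceptional_vectors_general (v vm vp : ℤ × ℤ)
    (hb : 0 ≤ v.2) (hnorm : 1 < euclNormZ2 v)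
    (h3 : cross vm vp = 1)
    (hsum : v = vm + vp)
    (h4 : euclNormZ2 vp < euclNormZ2 v) (h5 : euclNormZ2 vm < euclNormZ2 v)
    (hQ : 0 ≤ QIminus vp vm) :
    (v = (1, 1) ∨ v = (-1, 1) ∨ v = (-2, 1) ∨ v = (-1, 2)) ∧ -3 ≤ QIminus v v := by
  rw [euclNormZ2_lt_euclNormZ2_iff] at h4 h5
  rw [one_lt_euclNormZ2_iff] at hnorm
  subst hsum
  have hbound := neg_three_le_QIminus_add_self h3 h5 h4 hQ
  exact ⟨eq_of_neg_three_le_QIminus_self hb hnorm hbound, hbound⟩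

/-- For the form `I₋` (with `n = 1`): the only primitive vectors `v = (a,b)` with `b ≥ 0` and
`|v| > 1` whose canonical decomposition `v = v₋ + v₊` (with `v₋ × v = v × v₊ = v₋ × v₊ = 1`
and `|v₊|, |v₋| < |v|`) satisfies `Q(v₊, v₋) ≥ 0` are `(1,1)`, `(−1,1)`, `(−2,1)`, `(−1,2)`,
and all of these satisfy `Q(v,v) ≥ −3`. -/
theorem Iminus_exceptional_vectors (v vm vp : ℤ × ℤ) (hprim : IsPrimitive v)
    (hb : 0 ≤ v.2) (hnorm : 1 < euclNormZ2 v)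
    (h1 : cross vm v = 1) (h2 : cross v vp = 1) (h3 : cross vm vp = 1)
    (hsum : v = vm + vp)
    (h4 : euclNormZ2 vp < euclNormZ2 v) (h5 : euclNormZ2 vm < euclNormZ2 v)
    (hQ : 0 ≤ QIminus vp vm) :
    (v = (1, 1) ∨ v = (-1, 1) ∨ v = (-2, 1) ∨ v = (-1, 2)) ∧ -3 ≤ QIminus v v :=
  Iminus_exceptional_vectors_general v vm vp hb hnorm h3 hsum h4 h5 hQ
end

section
/- Let S = {(a,b) ∈ ℤ≥1 × ℤ≥1 : a + b ≥ 6, a > b, gcd(a,b) = 1}. Define an equivalence relation on S generated by: (a,b) ∼ (c,d) if a+b = c+d; (a,b) ∼ (a+1, b−2) whenever both lie in S; and (5,4) ∼ (7,1). Then all points of S are equivalent. -/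
/-- The set `S` of coprime ordered pairs of positive integers with first coordinate strictly
larger and sum at least `6`. -/
def S : Set (ℤ × ℤ) :=
  {p | 1 ≤ p.1 ∧ 1 ≤ p.2 ∧ 6 ≤ p.1 + p.2 ∧ p.2 < p.1 ∧ Int.gcd p.1 p.2 = 1}

/-- The generating relations on `S`: same sum; `(a,b) ∼ (a+1, b−2)` when both lie in `S`;
and `(5,4) ∼ (7,1)`. -/
def genRel (p q : ℤ × ℤ) : Prop :=
  p ∈ S ∧ q ∈ S ∧
    (p.1 + p.2 = q.1 + q.2 ∨ q = (p.1 + 1, p.2 - 2) ∨ (p = (5, 4) ∧ q = (7, 1)))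

lemma nt (m : ℕ) (hm : 7 ≤ m) (hm9 : m ≠ 9) :
    ∃ b : ℕ, 3 ≤ b ∧ 2*b < m ∧ Nat.gcd b m = 1 ∧ Nat.gcd (b-2) (m-1) = 1 := by
  by_cases h3 : 3 ∣ m
  · by_cases h5 : 5 ∣ m
    · by_cases h7 : 7 ∣ m
      · -- general case
        have hm105 : 105 ≤ m := by omega
        have hex : ∃ k, Nat.Prime k ∧ k % 2 = 1 ∧ ¬ k ∣ m := by
          obtain ⟨q, hq, hqp⟩ := Nat.exists_infinite_primes (m+2)
          refine ⟨q, hqp, ?_, fun hd => by have := Nat.le_of_dvd (by omega) hd; omega⟩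
          rcases hqp.eq_two_or_odd with h | h
          · omega
          · exact h
        classical
        set p := Nat.find hex with hpdef
        obtain ⟨hp, hpodd, hpnd⟩ := Nat.find_spec hex
        rw [← hpdef] at hp hpodd hpnd
        have hmin : ∀ k, Nat.Prime k → k % 2 = 1 → k < p → k ∣ m := by
          intro k hk hk2 hkp
          by_contra h
          exact Nat.find_min hex hkp ⟨hk, hk2, h⟩
        have hp11 : 11 ≤ p := by
          have h2 := hp.two_le
          by_contra h
          push_neg at h
          have h9 : p ≠ 9 := by rintro h'; rw [h'] at hp; norm_num at hp
          have h3' : p ≠ 3 := by rintro h'; rw [h'] at hpnd; exact hpnd h3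
          have h5' : p ≠ 5 := by rintro h'; rw [h'] at hpnd; exact hpnd h5
          have h7' : p ≠ 7 := by rintro h'; rw [h'] at hpnd; exact hpnd h7
          omega
        -- Bertrand: prime r with (p-1)/2 < r ≤ p-1
        obtain ⟨r, hr, hrt, hrt2⟩ := Nat.exists_prime_lt_and_le_two_mul ((p-1)/2) (by omega)
        have hrp : r < p := by omega
        have hr7 : 7 ≤ r := by
          have h6 : r ≠ 6 := by rintro rfl; exact absurd hr (by decide)
          omega
        have hrodd : r % 2 = 1 := by
          rcases hr.eq_two_or_odd with h | h
          · omega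
          · exact h
        have hrdvd : r ∣ m := hmin r hr hrodd hrp
        have hcop : Nat.Coprime 5 r := by
          rw [Nat.coprime_primes (by norm_num) hr]
          omega
        have h5r : 5 * r ∣ m := hcop.mul_dvd_of_dvd_of_dvd h5 hrdvd
        have hle : 5 * r ≤ m := Nat.le_of_dvd (by omega) h5r
        refine ⟨p, by omega, by omega, (hp.coprime_iff_not_dvd).mpr hpnd, ?_⟩
        by_contra hc
        set d := Nat.gcd (p-2) (m-1) with hd
        have hq' := Nat.minFac_prime hc
        have hq1 : d.minFac ∣ p - 2 := (Nat.minFac_dvd d).trans (Nat.gcd_dvd_left _ _)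
        have hq2 : d.minFac ∣ m - 1 := (Nat.minFac_dvd d).trans (Nat.gcd_dvd_right _ _)
        have hqle : d.minFac ≤ p - 2 := Nat.le_of_dvd (by omega) hq1
        have hqodd : d.minFac % 2 = 1 := by
          rcases hq'.eq_two_or_odd with h | h
          · exfalso
            rw [h] at hq1
            omega
          · exact h
        have hqm : d.minFac ∣ m := hmin _ hq' hqodd (by omega)
        have : d.minFac ∣ m - (m-1) := Nat.dvd_sub hqm hq2
        have h1 : m - (m-1) = 1 := by omega
        rw [h1] at this
        exact hq'.one_lt.ne' (Nat.dvd_one.mp this)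
      · refine ⟨7, by norm_num, by omega, (Nat.Prime.coprime_iff_not_dvd (by norm_num)).mpr h7, ?_⟩
        have : ¬ (5 : ℕ) ∣ (m - 1) := by omega
        exact ((Nat.Prime.coprime_iff_not_dvd (by norm_num)).mpr this)
    · refine ⟨5, by norm_num, by omega, (Nat.Prime.coprime_iff_not_dvd (by norm_num)).mpr h5, ?_⟩
      have : ¬ (3 : ℕ) ∣ (m - 1) := by omega
      exact ((Nat.Prime.coprime_iff_not_dvd (by norm_num)).mpr this)
  · exact ⟨3, le_refl _, by omega, (Nat.prime_three.coprime_iff_not_dvd).mpr h3, Nat.gcd_one_left _⟩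

/-- Canonical point at level `n`. -/
def c (n : ℕ) : ℤ × ℤ := ((n : ℤ) - 1, 1)

lemma cS {n : ℕ} (h : 6 ≤ n) : c n ∈ S := by
  refine ⟨?_, le_refl _, ?_, ?_, ?_⟩ <;> simp only [c]
  · have : (6 : ℤ) ≤ n := by exact_mod_cast h
    omega
  · have : (6 : ℤ) ≤ n := by exact_mod_cast h
    omega
  · have : (6 : ℤ) ≤ n := by exact_mod_cast h
    omega
  · simp [Int.gcd]

lemma step (n : ℕ) (h : 6 ≤ n) : Relation.EqvGen genRel (c n) (c (n + 1)) := by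
  by_cases h9 : n = 8
  · subst h9
    have h1 : genRel ((5 : ℤ), (4 : ℤ)) ((7 : ℤ), (1 : ℤ)) := by
      refine ⟨⟨by norm_num, by norm_num, by norm_num, by norm_num, by decide⟩,
        ⟨by norm_num, by norm_num, by norm_num, by norm_num, by decide⟩, Or.inr (Or.inr ⟨rfl, rfl⟩)⟩
    have h2 : genRel ((5 : ℤ), (4 : ℤ)) (c 9) := by
      refine ⟨h1.1, cS (by norm_num), Or.inl ?_⟩
      simp [c]
    have h3 : c 8 = ((7 : ℤ), (1 : ℤ)) := by simp [c]
    rw [h3]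
    exact Relation.EqvGen.trans _ _ _
      (Relation.EqvGen.symm _ _ (Relation.EqvGen.rel _ _ h1))
      (Relation.EqvGen.rel _ _ h2)
  · obtain ⟨b, hb3, hb2, hg1, hg2⟩ := nt (n + 1) (by omega) (by omega)
    have hble : b ≤ n + 1 := by omega
    have hble2 : b - 2 ≤ n := by omega
    have hcast : ((n + 1 - b : ℕ) : ℤ) = (n : ℤ) + 1 - (b : ℤ) := by
      push_cast [hble]; ring
    have hcast2 : ((n + 2 - b : ℕ) : ℤ) = (n : ℤ) + 2 - (b : ℤ) := by
      push_cast [show b ≤ n + 2 by omega]; ring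
    have hb3' : (3 : ℤ) ≤ (b : ℤ) := by exact_mod_cast hb3
    have hb2' : 2 * (b : ℤ) < (n : ℤ) + 1 := by exact_mod_cast hb2
    set P : ℤ × ℤ := (((n + 1 - b : ℕ) : ℤ), ((b : ℕ) : ℤ)) with hP
    set Q : ℤ × ℤ := (((n + 2 - b : ℕ) : ℤ), ((b - 2 : ℕ) : ℤ)) with hQ
    have hPS : P ∈ S := by
      refine ⟨?_, ?_, ?_, ?_, ?_⟩ <;> simp only [P, hcast]
      · omega
      · omega
      · omega
      · omega
      · rw [show ((n:ℤ) + 1 - b) = ((n + 1 - b : ℕ) : ℤ) from hcast.symm,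
          show ((b : ℕ) : ℤ) = ((b : ℕ) : ℤ) from rfl]
        rw [Int.gcd_natCast_natCast, Nat.gcd_sub_self_left hble, Nat.gcd_comm]
        exact hg1
    have hQS : Q ∈ S := by
      have hcastb : ((b - 2 : ℕ) : ℤ) = (b : ℤ) - 2 := by push_cast [show 2 ≤ b by omega]; ring
      refine ⟨?_, ?_, ?_, ?_, ?_⟩ <;> simp only [Q, hcast2, hcastb]
      · omega
      · omega
      · omega
      · omega
      · rw [show ((n:ℤ) + 2 - b) = ((n + 2 - b : ℕ) : ℤ) from hcast2.symm,
          show ((b:ℤ) - 2) = ((b - 2 : ℕ) : ℤ) from hcastb.symm]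
        rw [Int.gcd_natCast_natCast]
        rw [show n + 2 - b = n - (b - 2) by omega, Nat.gcd_sub_self_left hble2, Nat.gcd_comm]
        simpa using hg2
    have r1 : genRel (c (n + 1)) P := by
      refine ⟨cS (by omega), hPS, Or.inl ?_⟩
      simp only [c, P, hcast]
      push_cast
      ring
    have r2 : genRel P Q := by
      refine ⟨hPS, hQS, Or.inr (Or.inl ?_)⟩
      have hcastb : ((b - 2 : ℕ) : ℤ) = (b : ℤ) - 2 := by push_cast [show 2 ≤ b by omega]; ring
      simp only [P, Q, Prod.mk.injEq]
      constructor
      · rw [hcast, hcast2]; ring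
      · rw [hcastb]
    have r3 : genRel Q (c n) := by
      refine ⟨hQS, cS h, Or.inl ?_⟩
      have hcastb : ((b - 2 : ℕ) : ℤ) = (b : ℤ) - 2 := by push_cast [show 2 ≤ b by omega]; ring
      simp only [c, Q, hcast2, hcastb]
      ring
    exact Relation.EqvGen.trans _ _ _
      (Relation.EqvGen.symm _ _ (Relation.EqvGen.rel _ _ r3))
      (Relation.EqvGen.trans _ _ _
        (Relation.EqvGen.symm _ _ (Relation.EqvGen.rel _ _ r2))
        (Relation.EqvGen.symm _ _ (Relation.EqvGen.rel _ _ r1)))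

lemma chain (n : ℕ) (h : 6 ≤ n) : Relation.EqvGen genRel (c 6) (c n) := by
  induction n, h using Nat.le_induction with
  | base => exact Relation.EqvGen.refl _
  | succ n hn ih => exact Relation.EqvGen.trans _ _ _ ih (step n hn)

/-- All points of `S` are equivalent under the equivalence relation generated by `genRel`. -/
theorem tree_equivalence : ∀ p ∈ S, ∀ q ∈ S, Relation.EqvGen genRel p q := by
  have key : ∀ p ∈ S, Relation.EqvGen genRel p (c 6) := by
    intro p hp
    obtain ⟨h1, h2, h3, h4, h5⟩ := hp
    set n : ℕ := (p.1 + p.2).toNat with hn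
    have hn6 : 6 ≤ n := by omega
    have hr : genRel p (c n) := by
      refine ⟨⟨h1, h2, h3, h4, h5⟩, cS hn6, Or.inl ?_⟩
      simp only [c]
      have : ((n : ℕ) : ℤ) = p.1 + p.2 := by
        rw [hn]; exact Int.toNat_of_nonneg (by omega)
      omega
    exact Relation.EqvGen.trans _ _ _ (Relation.EqvGen.rel _ _ hr)
      (Relation.EqvGen.symm _ _ (chain n hn6))
  intro p hp q hq
  exact Relation.EqvGen.trans _ _ _ (key p hp) (Relation.EqvGen.symm _ _ (key q hq))
end

section
/- For every integer m ≥ 6 with m ≠ 8, there exists a pair (a,b) of positive integers with a + b = m, a > b ≥ 1, gcd(a,b) = 1, such that (a−1, b+2) also satisfies a−1 > b+2 ≥ 1 and gcd(a−1, b+2) = 1. -/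
lemma helper_smallest_odd_prime (n : ℕ) (hn : 7 ≤ n) (hn9 : n ≠ 9) :
    ∃ p : ℕ, p.Prime ∧ Odd p ∧ ¬ p ∣ n ∧ 2 * p < n ∧
      ∀ q : ℕ, q.Prime → Odd q → q < p → q ∣ n := by
  classical
  have hex : ∃ p : ℕ, p.Prime ∧ Odd p ∧ ¬ p ∣ n := by
    obtain ⟨q, hq1, hq2⟩ := Nat.exists_infinite_primes (n + 1)
    refine ⟨q, hq2, hq2.odd_of_ne_two (by omega), fun h => ?_⟩
    have := Nat.le_of_dvd (by omega) h
    omega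
  set p := Nat.find hex with hpdef
  obtain ⟨hp, hodd, hnd⟩ := Nat.find_spec hex
  rw [← hpdef] at hp hodd hnd
  have hmin : ∀ q : ℕ, q.Prime → Odd q → q < p → q ∣ n := by
    intro q hq ho hlt
    by_contra h
    exact Nat.find_min hex hlt ⟨hq, ho, h⟩
  have hp2 : 2 ≤ p := hp.two_le
  have hpne2 : p ≠ 2 := by
    rw [Nat.odd_iff] at hodd; omega
  have hp3 : 3 ≤ p := by omega
  refine ⟨p, hp, hodd, hnd, ?_, hmin⟩
  rcases eq_or_lt_of_le hp3 with h3 | h4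
  · omega
  have hp5 : 5 ≤ p := by rw [Nat.odd_iff] at hodd; omega
  have h3d : 3 ∣ n := hmin 3 (by norm_num) (by decide) (by omega)
  rcases eq_or_lt_of_le hp5 with h5 | h6
  · omega
  have hp7 : 7 ≤ p := by rw [Nat.odd_iff] at hodd; omega
  have h5d : 5 ∣ n := hmin 5 (by norm_num) (by decide) (by omega)
  have h15 : 15 ∣ n := (show Nat.Coprime 3 5 by decide).mul_dvd_of_dvd_of_dvd h3d h5d
  have h15le : 15 ≤ n := Nat.le_of_dvd (by omega) h15
  rcases eq_or_lt_of_le hp7 with h7 | h8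
  · omega
  have hp11 : 11 ≤ p := by
    rw [Nat.odd_iff] at hodd
    have : p ≠ 9 := by intro h; rw [h] at hp; norm_num at hp
    omega
  obtain ⟨k, hk⟩ := hodd
  have hk5 : 5 ≤ k := by omega
  obtain ⟨q, hqp, hq1, hq2⟩ := Nat.exists_prime_lt_and_le_two_mul k (by omega)
  have hq7 : 7 ≤ q := by
    have : q ≠ 6 := by intro h; rw [h] at hqp; norm_num at hqp
    omega
  have hqodd : Odd q := hqp.odd_of_ne_two (by omega)
  have hqd : q ∣ n := hmin q hqp hqodd (by omega)
  have hcop : Nat.Coprime 15 q := by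
    rw [Nat.coprime_comm]
    refine (hqp.coprime_iff_not_dvd).mpr fun h => ?_
    have := (Nat.Prime.dvd_mul hqp (m := 3) (n := 5)).mp (by norm_num at h ⊢; exact h)
    rcases this with h' | h' <;> have := Nat.le_of_dvd (by norm_num) h' <;> omega
  have h15q : 15 * q ∣ n := hcop.mul_dvd_of_dvd_of_dvd h15 hqd
  have := Nat.le_of_dvd (by omega) h15q
  omega


/-- For every integer `m ≥ 6` with `m ≠ 8`, there is a pair `(a,b)` with `a + b = m`,
`a > b ≥ 1`, `gcd(a,b) = 1`, such that `(a−1, b+2)` also satisfies `a−1 > b+2 ≥ 1` and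
`gcd(a−1, b+2) = 1`. -/
theorem exists_good_pair (m : ℤ) (hm : 6 ≤ m) (hm8 : m ≠ 8) :
    ∃ a b : ℤ, a + b = m ∧ 1 ≤ b ∧ b < a ∧ Int.gcd a b = 1 ∧
      1 ≤ b + 2 ∧ b + 2 < a - 1 ∧ Int.gcd (a - 1) (b + 2) = 1 := by
  obtain ⟨p, hp, hodd, hnd, hbound, hmin⟩ := helper_smallest_odd_prime (m+1).toNat (by omega) (by omega)
  have hcast : ((m+1).toNat : ℤ) = m + 1 := by omega
  have hb : 2 * (p : ℤ) < m + 1 := by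
    have := hbound
    omega
  have hp2 : 2 ≤ p := hp.two_le
  have hpne2 : p ≠ 2 := by rw [Nat.odd_iff] at hodd; omega
  have hp3 : 3 ≤ p := by omega
  have hnd' : ¬ (p : ℤ) ∣ m + 1 := by
    intro h
    apply hnd
    have : (p : ℤ) ∣ ((m+1).toNat : ℤ) := by rw [hcast]; exact h
    exact_mod_cast this
  refine ⟨m - p + 2, (p : ℤ) - 2, by ring, by omega, by omega, ?_, by omega, by omega, ?_⟩
  · -- gcd (m - p + 2) (p - 2) = 1
    by_contra hne
    obtain ⟨q, hq, hqd⟩ := Nat.exists_prime_and_dvd hne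
    have hda : (q : ℤ) ∣ m - p + 2 :=
      dvd_trans (Int.natCast_dvd_natCast.mpr hqd) (Int.gcd_dvd_left _ _)
    have hdb : (q : ℤ) ∣ (p : ℤ) - 2 :=
      dvd_trans (Int.natCast_dvd_natCast.mpr hqd) (Int.gcd_dvd_right _ _)
    -- q divides p - 2 in ℕ
    have hdb' : q ∣ p - 2 := by
      have : ((p - 2 : ℕ) : ℤ) = (p : ℤ) - 2 := by omega
      rw [← this] at hdb
      exact_mod_cast hdb
    -- p - 2 is odd, ≥ 1
    have hpodd : p % 2 = 1 := Nat.odd_iff.mp hodd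
    rcases Nat.eq_or_lt_of_le hp3 with h3 | h4
    · -- p = 3, so q ∣ 1
      have : q ∣ 1 := by rw [← h3] at hdb'; simpa using hdb'
      exact hq.one_lt.ne' (Nat.eq_one_of_dvd_one this) |>.elim
    · have hp5 : 5 ≤ p := by omega
      have hqle : q ≤ p - 2 := Nat.le_of_dvd (by omega) hdb'
      have hqodd : Odd q := by
        rcases hq.eq_two_or_odd' with h | h
        · exfalso
          rw [h] at hdb'
          omega
        · exact h
      have hqn : q ∣ (m+1).toNat := hmin q hq hqodd (by omega)
      have hqm1 : (q : ℤ) ∣ m + 1 := by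
        rw [← hcast]
        exact_mod_cast hqn
      have hqm : (q : ℤ) ∣ m := by
        have := dvd_add hda hdb
        have h2 : (q:ℤ) ∣ m - p + 2 + ((p:ℤ) - 2) := this
        have : m - ↑p + 2 + ((p:ℤ) - 2) = m := by ring
        rwa [this] at h2
      have : (q : ℤ) ∣ 1 := by
        have := dvd_sub hqm1 hqm
        simpa using this
      have : q ∣ 1 := by exact_mod_cast this
      exact hq.one_lt.ne' (Nat.eq_one_of_dvd_one this) |>.elim
  · -- gcd (m - p + 2 - 1) (p - 2 + 2) = 1
    have e1 : m - (p:ℤ) + 2 - 1 = (m + 1) - p := by ring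
    have e2 : (p:ℤ) - 2 + 2 = p := by ring
    rw [e1, e2]
    by_contra hne
    obtain ⟨q, hq, hqd⟩ := Nat.exists_prime_and_dvd hne
    have hda : (q : ℤ) ∣ (m + 1) - p :=
      dvd_trans (Int.natCast_dvd_natCast.mpr hqd) (Int.gcd_dvd_left _ _)
    have hdb : (q : ℤ) ∣ (p : ℤ) :=
      dvd_trans (Int.natCast_dvd_natCast.mpr hqd) (Int.gcd_dvd_right _ _)
    have hqp : q = p := (Nat.prime_dvd_prime_iff_eq hq hp).mp (by exact_mod_cast hdb)
    have : (q : ℤ) ∣ m + 1 := by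
      have := dvd_add hda hdb
      have h2 : (m+1) - (p:ℤ) + p = m + 1 := by ring
      rwa [h2] at this
    rw [hqp] at this
    exact hnd' this
end

section
/- Let χ be the bilinear form on ℤ² with χ(α,α)=χ(β,α)=χ(β,β)=−1, χ(α,β)=0. Define the phase φ: (ℤ² ∖ {0}) → ℝ via the hexagonal coordinates: φ(α)=0, φ(β)=1/3, with φ(av) = φ(v) for a > 0 and the phase of a positive combination lying between the phases of its constituents. Then for nonzero v, w with φ(w) − φ(v) ∈ (−1,1): χ(v,w) < 0 if and only if φ(w) − φ(v) ∈ (−2/3, 1/3), and χ(v,w) = 0 if and only if φ(w) − φ(v) ∈ {−2/3, 1/3}. -/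
open Complex

/-- The Euler pairing on ℤ² (basis `α = (1,0)`, `β = (0,1)`) with
`χ(α,α) = χ(β,α) = χ(β,β) = −1` and `χ(α,β) = 0`. -/
def chi (v w : ℤ × ℤ) : ℤ := -(v.1 * w.1) - v.2 * w.1 - v.2 * w.2

/-- The hexagonal central charge `Z(nα + mβ) = n + m·e^{iπ/3}`. -/
noncomputable def Zhex (v : ℤ × ℤ) : ℂ :=
  (v.1 : ℂ) + (v.2 : ℂ) * Complex.exp ((Real.pi : ℂ) / 3 * Complex.I)

/-- The phase `φ(v) = Arg(Z(v))/π`, so that `φ(α) = 0` and `φ(β) = 1/3`. -/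
noncomputable def phase (v : ℤ × ℤ) : ℝ := (Zhex v).arg / Real.pi

/-!
The phase difference is read off from `Z(v)‾ · Z(w) = ‖Z v‖ ‖Z w‖ e^{iπ(φ(w) - φ(v))}`, while a
direct computation gives `Re (Z(v)‾ · Z(w) · e^{iπ/6}) = -(√3/2) χ(v,w)`. Hence `χ(v,w)` has the
sign of `-cos (π (φ(w) - φ(v) + 1/6))`, and on the window `φ(w) - φ(v) ∈ (-1, 1)` this cosine is
positive exactly on `(-2/3, 1/3)` and vanishes exactly at the two endpoints.
-/

namespace Real

theorem cos_pi_mul_pos_iff {t : ℝ} (ht : t ∈ Set.Ioo (-(3 / 2)) (3 / 2)) :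
    0 < cos (π * t) ↔ t ∈ Set.Ioo (-(1 / 2)) (1 / 2) := by
  obtain ⟨ht₁, ht₂⟩ := ht
  have hπ := pi_pos
  refine ⟨fun hcos => ⟨?_, ?_⟩, fun ⟨h₁, h₂⟩ => cos_pos_of_mem_Ioo ⟨by nlinarith, by nlinarith⟩⟩
  · by_contra! h
    have := cos_nonpos_of_pi_div_two_le_of_le (x := -(π * t)) (by nlinarith) (by nlinarith)
    rw [cos_neg] at this
    linarith
  · by_contra! h
    have := cos_nonpos_of_pi_div_two_le_of_le (x := π * t) (by nlinarith) (by nlinarith)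
    linarith

theorem cos_pi_mul_eq_zero_iff {t : ℝ} (ht : t ∈ Set.Ioo (-(3 / 2)) (3 / 2)) :
    cos (π * t) = 0 ↔ t = -(1 / 2) ∨ t = 1 / 2 := by
  constructor
  · intro hcos
    obtain ⟨k, hk⟩ := cos_eq_zero_iff.mp hcos
    have ht_eq : t = (2 * k + 1) / 2 := by
      field_simp at hk ⊢
      linarith
    obtain ⟨ht₁, ht₂⟩ := ht
    rw [ht_eq] at ht₁ ht₂ ⊢
    have hk₁ : -2 < k := by exact_mod_cast (by linarith : (-2 : ℝ) < k)
    have hk₂ : k < 1 := by exact_mod_cast (by linarith : (k : ℝ) < 1)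
    interval_cases k <;> norm_num
  · rintro (rfl | rfl)
    · rw [mul_neg, cos_neg, mul_one_div, cos_pi_div_two]
    · rw [mul_one_div, cos_pi_div_two]

end Real

open ComplexConjugate in
theorem Complex.re_conj_mul_mul_exp_ofReal_mul_I (z w : ℂ) (c : ℝ) :
    (conj z * w * exp (c * I)).re = ‖z‖ * ‖w‖ * Real.cos (w.arg - z.arg + c) := by
  rw [Real.cos_add, Real.cos_sub, Real.sin_sub]
  simp only [mul_re, mul_im, conj_re, conj_im, exp_ofReal_mul_I_re, exp_ofReal_mul_I_im]
  rw [← norm_mul_cos_arg z, ← norm_mul_sin_arg z, ← norm_mul_cos_arg w, ← norm_mul_sin_arg w]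
  ring

theorem exp_pi_div_three_mul_I : exp ((Real.pi : ℂ) / 3 * I) = 1 / 2 + (Real.sqrt 3 / 2 : ℝ) * I := by
  rw [show (Real.pi : ℂ) / 3 * I = ((Real.pi / 3 : ℝ) : ℂ) * I by push_cast; ring,
    exp_mul_I, ← ofReal_cos, ← ofReal_sin, Real.cos_pi_div_three, Real.sin_pi_div_three]
  push_cast
  ring

theorem Zhex_re (v : ℤ × ℤ) : (Zhex v).re = v.1 + v.2 / 2 := by
  simp [Zhex, exp_pi_div_three_mul_I]
  ring

theorem Zhex_im (v : ℤ × ℤ) : (Zhex v).im = v.2 * (Real.sqrt 3 / 2) := by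
  simp [Zhex, exp_pi_div_three_mul_I]

theorem Zhex_ne_zero {v : ℤ × ℤ} (hv : v ≠ 0) : Zhex v ≠ 0 := by
  intro h
  have h₂ : v.2 = 0 := by
    have := Zhex_im v
    rw [h, zero_im, eq_comm] at this
    exact_mod_cast (mul_eq_zero.mp this).resolve_right (by positivity)
  have h₁ : v.1 = 0 := by
    have := Zhex_re v
    rw [h, zero_re, h₂] at this
    exact_mod_cast (by simpa using this.symm : (v.1 : ℝ) = 0)
  exact hv (Prod.ext h₁ h₂)

open ComplexConjugate in
theorem re_conj_Zhex_mul_Zhex_mul_exp (v w : ℤ × ℤ) :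
    (conj (Zhex v) * Zhex w * exp ((Real.pi / 6 : ℝ) * I)).re
      = -(Real.sqrt 3 / 2) * chi v w := by
  have hs : Real.sqrt 3 ^ 2 = 3 := Real.sq_sqrt (by norm_num)
  simp only [mul_re, mul_im, conj_re, conj_im, Zhex_re, Zhex_im, exp_ofReal_mul_I_re,
    exp_ofReal_mul_I_im, Real.cos_pi_div_six, Real.sin_pi_div_six, chi]
  push_cast
  linear_combination (Real.sqrt 3 * (v.2 : ℝ) * (w.2 : ℝ) / 8) * hs

theorem chi_eq_neg_mul_cos (v w : ℤ × ℤ) :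
    (chi v w : ℝ) = -(2 / Real.sqrt 3 * ‖Zhex v‖ * ‖Zhex w‖
      * Real.cos (Real.pi * (phase w - phase v + 1 / 6))) := by
  have key := re_conj_Zhex_mul_Zhex_mul_exp v w
  rw [re_conj_mul_mul_exp_ofReal_mul_I] at key
  have hθ : Real.pi * (phase w - phase v + 1 / 6) = (Zhex w).arg - (Zhex v).arg + Real.pi / 6 := by
    unfold phase
    field_simp
  have hs : Real.sqrt 3 ≠ 0 := by positivity
  calc (chi v w : ℝ) = -(2 / Real.sqrt 3) * (-(Real.sqrt 3 / 2) * chi v w) := by field_simp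
    _ = _ := by rw [← key, hθ]; ring

section

variable {v w : ℤ × ℤ} (hv : v ≠ 0) (hw : w ≠ 0)
include hv hw

theorem chi_neg_iff_cos_pos :
    chi v w < 0 ↔ 0 < Real.cos (Real.pi * (phase w - phase v + 1 / 6)) := by
  have hK : 0 < 2 / Real.sqrt 3 * ‖Zhex v‖ * ‖Zhex w‖ := by
    have := norm_pos_iff.2 (Zhex_ne_zero hv); have := norm_pos_iff.2 (Zhex_ne_zero hw); positivity
  rw [← Int.cast_lt (R := ℝ), chi_eq_neg_mul_cos, Int.cast_zero, neg_lt_zero,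
    mul_pos_iff_of_pos_left hK]

theorem chi_eq_zero_iff_cos_eq_zero :
    chi v w = 0 ↔ Real.cos (Real.pi * (phase w - phase v + 1 / 6)) = 0 := by
  have hK : 2 / Real.sqrt 3 * ‖Zhex v‖ * ‖Zhex w‖ ≠ 0 := by
    have := Zhex_ne_zero hv; have := Zhex_ne_zero hw; positivity
  rw [← Int.cast_inj (α := ℝ), chi_eq_neg_mul_cos, Int.cast_zero, neg_eq_zero, mul_eq_zero,
    or_iff_right hK]

end

/-- For nonzero `v, w` with `φ(w) − φ(v) ∈ (−1,1)`: `χ(v,w) < 0` iff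
`φ(w) − φ(v) ∈ (−2/3, 1/3)`, and `χ(v,w) = 0` iff `φ(w) − φ(v) ∈ {−2/3, 1/3}`. -/
theorem chi_sign_vs_phase (v w : ℤ × ℤ) (hv : v ≠ 0) (hw : w ≠ 0)
    (h : phase w - phase v ∈ Set.Ioo (-1 : ℝ) 1) :
    (chi v w < 0 ↔ phase w - phase v ∈ Set.Ioo (-(2 / 3) : ℝ) (1 / 3)) ∧
    (chi v w = 0 ↔ (phase w - phase v = -(2 / 3) ∨ phase w - phase v = 1 / 3)) := by
  have ht : phase w - phase v + 1 / 6 ∈ Set.Ioo (-(3 / 2) : ℝ) (3 / 2) :=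
    ⟨by linarith [h.1], by linarith [h.2]⟩
  rw [chi_neg_iff_cos_pos hv hw, Real.cos_pi_mul_pos_iff ht, Set.add_mem_Ioo_iff_left,
    chi_eq_zero_iff_cos_eq_zero hv hw, Real.cos_pi_mul_eq_zero_iff ht,
    ← eq_sub_iff_add_eq, ← eq_sub_iff_add_eq]
  norm_num
end
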